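/- arXiv:1810.07956 — 5 statements merged into one kernel-verified Lean document; each statement's English description precedes it below -/
import Mathlib

section
/- For all n ≥ 0, the Eulerian polynomials satisfy E_{2n+1} = (-1)^n · A_{2n+1}(-1), where A_n(q) = Σ_{π ∈ S_n} q^{des(π)} and E_m is the number of alternating permutations of [m]. -/
open Finset

/-- The set of (0-based) descent indices of a permutation of `Fin n`:
`i` is a descent index if `π i > π (i+1)` (so the 1-based descent position is `i+1`). -/
def descentSet {n : ℕ} (π : Equiv.Perm (Fin n)) : Finset ℕ :=
  (Finset.range n).filter
    (fun i => ∃ h : i + 1 < n, π ⟨i + 1, h⟩ < π ⟨i, Nat.lt_of_succ_lt h⟩)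

/-- The number of descents of `π`. -/
def des {n : ℕ} (π : Equiv.Perm (Fin n)) : ℕ := (descentSet π).card

/-- The number of descents of `π` at odd (1-based) positions, i.e. even 0-based indices. -/
def odes {n : ℕ} (π : Equiv.Perm (Fin n)) : ℕ :=
  ((descentSet π).filter (fun i => Even i)).card

/-- The number of descents of `π` at even (1-based) positions, i.e. odd 0-based indices. -/
def edes {n : ℕ} (π : Equiv.Perm (Fin n)) : ℕ :=
  ((descentSet π).filter (fun i => Odd i)).card

/-- The refined Eulerian polynomial `A_n(p,q) = Σ_π p^{odes π} q^{edes π}`. -/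
def refinedEulerian (n : ℕ) (p q : ℝ) : ℝ :=
  ∑ π : Equiv.Perm (Fin n), p ^ odes π * q ^ edes π

/-- The Eulerian polynomial `A_n(q) = Σ_π q^{des π}` as a function. -/
def eulerianEval (n : ℕ) (q : ℝ) : ℝ :=
  ∑ π : Equiv.Perm (Fin n), q ^ des π

/-- The Eulerian polynomial `A_n(q)` as a polynomial. -/
noncomputable def eulerianPolynomial (n : ℕ) : Polynomial ℝ :=
  ∑ π : Equiv.Perm (Fin n), Polynomial.X ^ des π

/-- The Eulerian number `A_{n,k}`: the number of permutations of `[n]` with `k` descents. -/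
def eulerianNumber (n k : ℕ) : ℕ :=
  (Finset.univ.filter (fun π : Equiv.Perm (Fin n) => des π = k)).card

/-- A permutation `a_1 a_2 … a_n` is alternating if `a_1 > a_2 < a_3 > ⋯`. -/
def IsAlternating {n : ℕ} (π : Equiv.Perm (Fin n)) : Prop :=
  ∀ i : ℕ, ∀ h : i + 1 < n,
    (π ⟨i + 1, h⟩ < π ⟨i, Nat.lt_of_succ_lt h⟩ ↔ Even i)

open scoped Classical in
/-- The Euler number `E_n`: the number of alternating permutations of `[n]`. -/
noncomputable def eulerNumber (n : ℕ) : ℕ :=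
  (Finset.univ.filter (fun π : Equiv.Perm (Fin n) => IsAlternating π)).card

/-- `a_{n,k}`: the number of permutations of `[n]` with `k` even descents and no odd descents. -/
def aNum (n k : ℕ) : ℕ :=
  (Finset.univ.filter (fun π : Equiv.Perm (Fin n) => edes π = k ∧ odes π = 0)).card

namespace AltProof

variable {m : ℕ}

/-- value of the one-line word at position `i`, with `+∞`-like boundary `m` out of range. -/
def vv (π : Equiv.Perm (Fin m)) (i : ℕ) : ℕ := if h : i < m then (π ⟨i, h⟩ : ℕ) else m

lemma vv_lt {π : Equiv.Perm (Fin m)} {i : ℕ} (h : i < m) : vv π i < m := by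
  rw [vv, dif_pos h]; exact (π ⟨i, h⟩).2

lemma vv_eq_m {π : Equiv.Perm (Fin m)} {i : ℕ} (h : m ≤ i) : vv π i = m := by
  rw [vv, dif_neg (by omega)]

lemma vv_inj {π : Equiv.Perm (Fin m)} {i j : ℕ} (hi : i < m) (hj : j < m)
    (h : vv π i = vv π j) : i = j := by
  rw [vv, dif_pos hi, vv, dif_pos hj] at h
  have := π.injective (Fin.ext h)
  exact congrArg Fin.val this

lemma vv_ne {π : Equiv.Perm (Fin m)} {i j : ℕ} (hi : i < m) (hj : j < m) (hij : i ≠ j) :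
    vv π i ≠ vv π j := fun h => hij (vv_inj hi hj h)

def dsc (π : Equiv.Perm (Fin m)) (i : ℕ) : Prop := vv π (i + 1) < vv π i

def inA (π : Equiv.Perm (Fin m)) (i : ℕ) : Prop := 0 < i ∧ vv π (i - 1) < vv π i

def outA (π : Equiv.Perm (Fin m)) (i : ℕ) : Prop := vv π i < vv π (i + 1)

def bad (π : Equiv.Perm (Fin m)) (i : ℕ) : Prop := inA π i ↔ outA π i

lemma outA_iff {π : Equiv.Perm (Fin m)} {i : ℕ} (hi : i < m) : outA π i ↔ ¬ dsc π i := by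
  unfold outA dsc
  rcases lt_or_ge (i+1) m with h | h
  · have := vv_ne (π := π) hi h (by omega)
    omega
  · have h1 := vv_eq_m (π := π) h
    have := vv_lt (π := π) hi
    omega

lemma inA_iff {π : Equiv.Perm (Fin m)} {i : ℕ} (hi : i < m) (h0 : 0 < i) :
    inA π i ↔ ¬ dsc π (i - 1) := by
  unfold inA dsc
  have he : i - 1 + 1 = i := by omega
  rw [he]
  have := vv_ne (π := π) (i := i - 1) (j := i) (by omega) hi (by omega)
  simp only [h0, true_and]
  omega

open scoped Classical in
noncomputable def badVals (π : Equiv.Perm (Fin m)) : Finset ℕ :=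
  ((Finset.range m).filter (fun i => bad π i)).image (vv π)

lemma badVals_nonempty {π : Equiv.Perm (Fin m)} {i : ℕ} (hi : i < m) (hb : bad π i) :
    (badVals π).Nonempty := by
  classical
  exact ⟨vv π i, Finset.mem_image.2 ⟨i, by simp [Finset.mem_filter, hi, hb, badVals], rfl⟩⟩

lemma mem_badVals {π : Equiv.Perm (Fin m)} {y : ℕ} :
    y ∈ badVals π ↔ ∃ i, i < m ∧ bad π i ∧ vv π i = y := by
  classical
  simp only [badVals, Finset.mem_image, Finset.mem_filter, Finset.mem_range]
  constructor
  · rintro ⟨i, ⟨h1, h2⟩, h3⟩; exact ⟨i, h1, h2, h3⟩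
  · rintro ⟨i, h1, h2, h3⟩; exact ⟨i, ⟨h1, h2⟩, h3⟩

/-- interval rotation: `q ↦ p`, `j ↦ j - 1` for `q < j ≤ p`, identity elsewhere. -/
def cyc (q p : ℕ) (hqp : q ≤ p) (hp : p < m) : Equiv.Perm (Fin m) where
  toFun j := if (j : ℕ) = q then ⟨p, hp⟩
    else if h : q < (j : ℕ) ∧ (j : ℕ) ≤ p then ⟨(j : ℕ) - 1, by omega⟩ else j
  invFun j := if (j : ℕ) = p then ⟨q, by omega⟩
    else if h : q ≤ (j : ℕ) ∧ (j : ℕ) < p then ⟨(j : ℕ) + 1, by omega⟩ else j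
  left_inv := by
    intro j
    have hj := j.isLt
    apply Fin.ext
    beta_reduce
    simp only [apply_ite Fin.val, apply_dite Fin.val, Fin.val_mk]
    split_ifs <;> omega
  right_inv := by
    intro j
    have hj := j.isLt
    apply Fin.ext
    beta_reduce
    simp only [apply_ite Fin.val, apply_dite Fin.val, Fin.val_mk]
    split_ifs <;> omega

lemma vv_apply (π : Equiv.Perm (Fin m)) (z : Fin m) : (π z : ℕ) = vv π (z : ℕ) := by
  rw [vv, dif_pos z.isLt]

lemma cyc_val {q p : ℕ} (hqp : q ≤ p) (hp : p < m) {k : ℕ} (hk : k < m) :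
    ((cyc q p hqp hp ⟨k, hk⟩ : Fin m) : ℕ) =
      if k = q then p else if q < k ∧ k ≤ p then k - 1 else k := by
  show (Fin.val (if (k : ℕ) = q then (⟨p, hp⟩ : Fin m)
    else if h : q < (k : ℕ) ∧ (k : ℕ) ≤ p then ⟨k - 1, by omega⟩ else ⟨k, hk⟩)) = _
  simp only [apply_ite Fin.val, apply_dite Fin.val, Fin.val_mk]
  split_ifs <;> rfl

lemma cyc_symm_val {q p : ℕ} (hqp : q ≤ p) (hp : p < m) {k : ℕ} (hk : k < m) :
    (((cyc q p hqp hp).symm ⟨k, hk⟩ : Fin m) : ℕ) =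
      if k = p then q else if q ≤ k ∧ k < p then k + 1 else k := by
  show (Fin.val (if (k : ℕ) = p then (⟨q, by omega⟩ : Fin m)
    else if h : q ≤ (k : ℕ) ∧ (k : ℕ) < p then ⟨k + 1, by omega⟩ else ⟨k, hk⟩)) = _
  simp only [apply_ite Fin.val, apply_dite Fin.val, Fin.val_mk]
  split_ifs <;> rfl

lemma vv_mul_cyc (π : Equiv.Perm (Fin m)) {q p : ℕ} (hqp : q ≤ p) (hp : p < m) (k : ℕ) :
    vv (π * cyc q p hqp hp) k =
      if k = q then vv π p else if q < k ∧ k ≤ p then vv π (k - 1) else vv π k := by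
  rcases lt_or_ge k m with hk | hk
  · rw [vv, dif_pos hk, Equiv.Perm.mul_apply, vv_apply, cyc_val hqp hp hk,
      apply_ite (vv π)]
    split_ifs <;> rfl
  · have h1 : k ≠ q := by omega
    have h2 : ¬ (q < k ∧ k ≤ p) := by omega
    rw [if_neg h1, if_neg h2, vv_eq_m hk, vv_eq_m hk]

lemma vv_mul_cyc_inv (π : Equiv.Perm (Fin m)) {q p : ℕ} (hqp : q ≤ p) (hp : p < m) (k : ℕ) :
    vv (π * (cyc q p hqp hp)⁻¹) k =
      if k = p then vv π q else if q ≤ k ∧ k < p then vv π (k + 1) else vv π k := by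
  rcases lt_or_ge k m with hk | hk
  · have hsymm : (π * (cyc q p hqp hp)⁻¹) ⟨k, hk⟩ = π ((cyc q p hqp hp).symm ⟨k, hk⟩) := rfl
    rw [vv, dif_pos hk, hsymm, vv_apply, cyc_symm_val hqp hp hk, apply_ite (vv π)]
    split_ifs <;> rfl
  · have h1 : k ≠ p := by omega
    have h2 : ¬ (q ≤ k ∧ k < p) := by omega
    rw [if_neg h1, if_neg h2, vv_eq_m hk, vv_eq_m hk]

section Core

variable {π : Equiv.Perm (Fin m)} {x q p : ℕ}

lemma dsc_def (π : Equiv.Perm (Fin m)) (i : ℕ) : dsc π i ↔ vv π (i + 1) < vv π i := Iff.rfl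

lemma dsc_rho (hqp : q < p) (hp : p < m) (hx : vv π p = x) (hA : inA π p) (hO : outA π p)
    (hblock : ∀ k, q ≤ k → k < p → vv π k < x)
    (hqmax : q = 0 ∨ x < vv π (q - 1)) (k : ℕ) :
    dsc (π * cyc q p hqp.le hp) k ↔
      (if k = q then True else if q < k ∧ k ≤ p then dsc π (k - 1) else dsc π k) := by
  have hvr : ∀ j, vv (π * cyc q p hqp.le hp) j =
      if j = q then x else if q < j ∧ j ≤ p then vv π (j - 1) else vv π j := by
    intro j; rw [vv_mul_cyc, hx]
  have hpm : vv π (p - 1) < x := by have := hA.2; rwa [hx] at this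
  have hpp : x < vv π (p + 1) := by have := hO; rwa [outA, hx] at this
  rw [dsc_def, hvr k, hvr (k + 1)]
  rcases eq_or_ne k q with hk | hk
  · rw [if_pos hk, if_pos hk, if_neg (by omega), if_pos (show q < k + 1 ∧ k + 1 ≤ p by omega),
      (by omega : k + 1 - 1 = k)]
    have : vv π k < x := hblock k (by omega) (by omega)
    exact iff_of_true this trivial
  · rw [if_neg hk, if_neg hk]
    by_cases h2 : q < k ∧ k ≤ p
    · rw [if_pos h2, if_pos h2]
      rcases eq_or_ne k p with hkp | hkp
      · rw [if_neg (by omega), if_neg (by omega), dsc_def π (k - 1),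
          (by omega : k - 1 + 1 = k)]
        subst hkp
        rw [hx]
        constructor
        · intro h; exfalso; omega
        · intro h; exfalso; omega
      · rw [if_neg (by omega), if_pos (show q < k + 1 ∧ k + 1 ≤ p by omega),
          dsc_def π (k - 1), (by omega : k + 1 - 1 = k), (by omega : k - 1 + 1 = k)]
    · rw [if_neg h2, if_neg h2]
      rcases eq_or_ne (k + 1) q with hk1 | hk1
      · rw [if_pos hk1]
        have hq0 : 0 < q := by omega
        have hxq : x < vv π (q - 1) := by omega
        have hbq : vv π q < x := hblock q le_rfl hqp
        rw [dsc_def π k]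
        have e1 : k = q - 1 := by omega
        have e2 : k + 1 = q := hk1
        rw [e1, (by omega : q - 1 + 1 = q)]
        exact iff_of_true (by omega) (by omega)
      · rw [if_neg hk1]
        by_cases h3 : q < k + 1 ∧ k + 1 ≤ p
        · exfalso; omega
        · rw [if_neg h3, dsc_def π k]

lemma descentSet_eq (π : Equiv.Perm (Fin m)) :
    descentSet π = (range m).filter (fun i => vv π (i + 1) < vv π i) := by
  classical
  ext i
  simp only [descentSet, Finset.mem_filter, Finset.mem_range]
  apply and_congr_right
  intro hi
  constructor
  · rintro ⟨h, hlt⟩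
    rw [vv, dif_pos h, vv, dif_pos (by omega)]
    exact hlt
  · intro hd
    by_cases h : i + 1 < m
    · refine ⟨h, ?_⟩
      rw [vv, dif_pos h, vv, dif_pos (by omega)] at hd
      exact hd
    · exfalso
      have h1 := vv_eq_m (π := π) (i := i + 1) (by omega)
      have h2 := vv_lt (π := π) hi
      omega

lemma des_eq (π : Equiv.Perm (Fin m)) :
    des π = ((range m).filter (fun i => vv π (i + 1) < vv π i)).card := by
  rw [des, descentSet_eq]

lemma des_rho (hqp : q < p) (hp : p < m) (hx : vv π p = x) (hA : inA π p) (hO : outA π p)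
    (hblock : ∀ k, q ≤ k → k < p → vv π k < x)
    (hqmax : q = 0 ∨ x < vv π (q - 1)) :
    des (π * cyc q p hqp.le hp) = des π + 1 := by
  classical
  have hdr := dsc_rho hqp hp hx hA hO hblock hqmax
  have hnotp : ¬ dsc π p := by
    have h1 := hO
    unfold outA at h1
    rw [dsc_def]
    omega
  have hq_mem : q ∈ descentSet (π * cyc q p hqp.le hp) := by
    rw [descentSet_eq, Finset.mem_filter, Finset.mem_range]
    refine ⟨by omega, ?_⟩
    have := (hdr q).2 (by rw [if_pos rfl]; trivial)
    exact this
  have key : ((descentSet (π * cyc q p hqp.le hp)).erase q).card = (descentSet π).card := by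
    apply Finset.card_nbij' (i := fun a => if q < a ∧ a ≤ p then a - 1 else a)
      (j := fun b => if q ≤ b ∧ b < p then b + 1 else b)
    · intro a ha
      obtain ⟨hne, ha'⟩ := Finset.mem_erase.1 ha
      rw [descentSet_eq, Finset.mem_filter, Finset.mem_range] at ha'
      simp only [descentSet_eq, Finset.mem_coe, Finset.mem_filter, Finset.mem_range]
      have h1 : dsc (π * cyc q p hqp.le hp) a := ha'.2
      have h2 := (hdr a).1 h1
      rw [if_neg hne] at h2
      by_cases hc : q < a ∧ a ≤ p
      · rw [if_pos hc] at h2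
        rw [if_pos hc]
        exact ⟨by omega, h2⟩
      · rw [if_neg hc] at h2
        rw [if_neg hc]
        exact ⟨ha'.1, h2⟩
    · intro b hb
      rw [descentSet_eq, Finset.mem_coe, Finset.mem_filter, Finset.mem_range] at hb
      simp only [Finset.mem_coe]
      have hbp : b ≠ p := by
        intro he
        exact hnotp (he ▸ hb.2)
      by_cases hc : q ≤ b ∧ b < p
      · rw [if_pos hc]
        rw [Finset.mem_erase, descentSet_eq, Finset.mem_filter, Finset.mem_range]
        refine ⟨by omega, by omega, ?_⟩
        apply (hdr (b + 1)).2
        rw [if_neg (by omega), if_pos (show q < b + 1 ∧ b + 1 ≤ p by omega),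
          (by omega : b + 1 - 1 = b)]
        exact hb.2
      · rw [if_neg hc]
        rw [Finset.mem_erase, descentSet_eq, Finset.mem_filter, Finset.mem_range]
        have hbq : b ≠ q := by omega
        refine ⟨hbq, hb.1, ?_⟩
        apply (hdr b).2
        rw [if_neg hbq, if_neg (by omega)]
        exact hb.2
    · intro a ha
      obtain ⟨hne, _⟩ := Finset.mem_erase.1 ha
      beta_reduce
      split_ifs <;> omega
    · intro b hb
      rw [descentSet_eq, Finset.mem_coe, Finset.mem_filter, Finset.mem_range] at hb
      beta_reduce
      have hbp : b ≠ p := by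
        intro he
        exact hnotp (he ▸ hb.2)
      split_ifs <;> omega
  have := Finset.card_erase_add_one hq_mem
  unfold des
  omega

/-- position transport map for `π * cyc q p`. -/
def pmap (q p j : ℕ) : ℕ := if j = p then q else if q ≤ j ∧ j < p then j + 1 else j

lemma vv_pmap (hqp : q < p) (hp : p < m) (hx : vv π p = x) (j : ℕ) :
    vv (π * cyc q p hqp.le hp) (pmap q p j) = vv π j := by
  have hvr : ∀ j', vv (π * cyc q p hqp.le hp) j' =
      if j' = q then x else if q < j' ∧ j' ≤ p then vv π (j' - 1) else vv π j' := by
    intro j'; rw [vv_mul_cyc, hx]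
  unfold pmap
  by_cases h1 : j = p
  · rw [if_pos h1, hvr q, if_pos rfl, h1, hx]
  · rw [if_neg h1]
    by_cases h2 : q ≤ j ∧ j < p
    · rw [if_pos h2, hvr (j + 1), if_neg (by omega),
        if_pos (show q < j + 1 ∧ j + 1 ≤ p by omega), Nat.add_sub_cancel]
    · rw [if_neg h2, hvr j, if_neg (by omega), if_neg (by omega)]

lemma bad_iff_pmap (hqp : q < p) (hp : p < m) (hx : vv π p = x) (hA : inA π p) (hO : outA π p)
    (hblock : ∀ k, q ≤ k → k < p → vv π k < x)
    (hqmax : q = 0 ∨ x < vv π (q - 1)) (j : ℕ) (hj : j < m) :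
    bad (π * cyc q p hqp.le hp) (pmap q p j) ↔ bad π j := by
  have hvr : ∀ j', vv (π * cyc q p hqp.le hp) j' =
      if j' = q then x else if q < j' ∧ j' ≤ p then vv π (j' - 1) else vv π j' := by
    intro j'; rw [vv_mul_cyc, hx]
  have hpm : vv π (p - 1) < x := by have := hA.2; rwa [hx] at this
  have hpp : x < vv π (p + 1) := by have := hO; rwa [outA, hx] at this
  have hA1 : 0 < p := hA.1
  have hbq : vv π q < x := hblock q le_rfl hqp
  unfold pmap
  by_cases h1 : j = p
  · rw [if_pos h1]
    subst h1
    unfold bad inA outA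
    simp only [hvr, Nat.add_sub_cancel]
    split_ifs <;> omega
  · rw [if_neg h1]
    by_cases h2 : q ≤ j ∧ j < p
    · rw [if_pos h2]
      have hbj : vv π j < x := hblock j h2.1 h2.2
      rcases eq_or_ne j q with hjq | hjq
      · subst hjq
        rcases eq_or_ne (j + 1) p with hp1 | hp1
        · subst hp1
          simp only [Nat.add_sub_cancel] at hpm hpp hx
          unfold bad inA outA
          simp only [hvr, Nat.add_sub_cancel]
          split_ifs <;> omega
        · unfold bad inA outA
          simp only [hvr, Nat.add_sub_cancel]
          split_ifs <;> omega
      · have hbj1 : vv π (j - 1) < x := hblock (j - 1) (by omega) (by omega)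
        rcases eq_or_ne (j + 1) p with hp1 | hp1
        · subst hp1
          simp only [Nat.add_sub_cancel] at hpm hpp hx
          unfold bad inA outA
          simp only [hvr, Nat.add_sub_cancel]
          split_ifs <;> omega
        · unfold bad inA outA
          simp only [hvr, Nat.add_sub_cancel]
          split_ifs <;> omega
    · rw [if_neg h2]
      rcases eq_or_ne (j + 1) q with hq1 | hq1
      · subst hq1
        simp only [Nat.add_sub_cancel] at hqmax hbq hblock hpm hpp hx
        unfold bad inA outA
        simp only [hvr, Nat.add_sub_cancel]
        split_ifs <;> omega
      · rcases eq_or_ne j (p + 1) with hp1 | hp1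
        · subst hp1
          unfold bad inA outA
          simp only [hvr, Nat.add_sub_cancel]
          split_ifs <;> omega
        · unfold bad inA outA
          simp only [hvr, Nat.add_sub_cancel]
          split_ifs <;> omega

lemma pmap_lt (hqp : q < p) (hp : p < m) {j : ℕ} (hj : j < m) : pmap q p j < m := by
  unfold pmap; split_ifs <;> omega

lemma pmap_surj (hqp : q < p) (hp : p < m) {k : ℕ} (hk : k < m) :
    ∃ j, j < m ∧ pmap q p j = k := by
  refine ⟨if k = q then p else if q < k ∧ k ≤ p then k - 1 else k, ?_, ?_⟩
  · split_ifs <;> omega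
  · unfold pmap; split_ifs <;> omega

lemma badVals_rho (hqp : q < p) (hp : p < m) (hx : vv π p = x) (hA : inA π p) (hO : outA π p)
    (hblock : ∀ k, q ≤ k → k < p → vv π k < x)
    (hqmax : q = 0 ∨ x < vv π (q - 1)) :
    badVals (π * cyc q p hqp.le hp) = badVals π := by
  ext y
  rw [mem_badVals, mem_badVals]
  constructor
  · rintro ⟨k, hk, hbk, hvk⟩
    obtain ⟨j, hj, hjk⟩ := pmap_surj hqp hp hk
    refine ⟨j, hj, ?_, ?_⟩
    · exact (bad_iff_pmap hqp hp hx hA hO hblock hqmax j hj).1 (hjk ▸ hbk)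
    · rw [← vv_pmap hqp hp hx j, hjk, hvk]
  · rintro ⟨j, hj, hbj, hvj⟩
    exact ⟨pmap q p j, pmap_lt hqp hp hj,
      (bad_iff_pmap hqp hp hx hA hO hblock hqmax j hj).2 hbj,
      by rw [vv_pmap hqp hp hx j, hvj]⟩

lemma vv_rho_q (hqp : q < p) (hp : p < m) (hx : vv π p = x) :
    vv (π * cyc q p hqp.le hp) q = x := by
  rw [vv_mul_cyc, if_pos rfl, hx]

lemma bad_rho_at_q (hqp : q < p) (hp : p < m) (hx : vv π p = x)
    (hblock : ∀ k, q ≤ k → k < p → vv π k < x)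
    (hqmax : q = 0 ∨ x < vv π (q - 1)) :
    ¬ inA (π * cyc q p hqp.le hp) q ∧ ¬ outA (π * cyc q p hqp.le hp) q := by
  have hvr : ∀ j', vv (π * cyc q p hqp.le hp) j' =
      if j' = q then x else if q < j' ∧ j' ≤ p then vv π (j' - 1) else vv π j' := by
    intro j'; rw [vv_mul_cyc, hx]
  have hbq : vv π q < x := hblock q le_rfl hqp
  constructor
  · unfold inA
    simp only [hvr, Nat.add_sub_cancel]
    split_ifs <;> omega
  · unfold outA
    simp only [hvr, Nat.add_sub_cancel]
    split_ifs <;> omega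

lemma rfind_facts (hqp : q < p) (hp : p < m) (hx : vv π p = x) (hO : outA π p)
    (hblock : ∀ k, q ≤ k → k < p → vv π k < x) :
    (∀ j, q ≤ j → j < p → ¬ x < vv (π * cyc q p hqp.le hp) (j + 1)) ∧
      x < vv (π * cyc q p hqp.le hp) (p + 1) := by
  have hvr : ∀ j', vv (π * cyc q p hqp.le hp) j' =
      if j' = q then x else if q < j' ∧ j' ≤ p then vv π (j' - 1) else vv π j' := by
    intro j'; rw [vv_mul_cyc, hx]
  have hpp : x < vv π (p + 1) := by have := hO; rwa [outA, hx] at this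
  constructor
  · intro j h1 h2
    rw [hvr (j + 1), if_neg (by omega), if_pos (by omega : q < j + 1 ∧ j + 1 ≤ p),
      Nat.add_sub_cancel]
    have := hblock j h1 h2
    omega
  · rw [hvr (p + 1), if_neg (by omega), if_neg (by omega)]
    exact hpp

end Core

lemma qex (π : Equiv.Perm (Fin m)) (x p : ℕ) : ∃ j, ∀ k, j ≤ k → k < p → vv π k < x :=
  ⟨p, fun k h1 h2 => absurd (h1.trans_lt h2) (lt_irrefl _)⟩

lemma rex (π : Equiv.Perm (Fin m)) (x p : ℕ) (hx : x < m) :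
    ∃ j, p ≤ j ∧ x < vv π (j + 1) :=
  ⟨p + m, by omega, by rw [vv_eq_m (by omega)]; omega⟩

lemma pex (π : Equiv.Perm (Fin m)) (h : (badVals π).Nonempty) :
    ∃ j, j < m ∧ bad π j ∧ vv π j = (badVals π).min' h :=
  mem_badVals.1 (Finset.min'_mem _ h)

open scoped Classical in
noncomputable def hop (π : Equiv.Perm (Fin m)) (x p : ℕ) : Equiv.Perm (Fin m) :=
  if h : p < m ∧ vv π p = x ∧ x < m then
    if hA : inA π p then
      if hq : Nat.find (qex π x p) < p then π * cyc (Nat.find (qex π x p)) p hq.le h.1 else π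
    else
      if hr : p ≤ Nat.find (rex π x p h.2.2) ∧ Nat.find (rex π x p h.2.2) < m then
        π * (cyc p (Nat.find (rex π x p h.2.2)) hr.1 hr.2)⁻¹
      else π
  else π

open scoped Classical in
noncomputable def Phi (π : Equiv.Perm (Fin m)) : Equiv.Perm (Fin m) :=
  if h : (badVals π).Nonempty then hop π ((badVals π).min' h) (Nat.find (pex π h)) else π

lemma Phi_eq_hop (π : Equiv.Perm (Fin m)) (h : (badVals π).Nonempty) {x p : ℕ}
    (hmin : (badVals π).min' h = x) (hp : p < m) (hvp : vv π p = x) (hb : bad π p) :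
    Phi π = hop π x p := by
  classical
  rw [Phi, dif_pos h]
  have hfind : Nat.find (pex π h) = p := by
    rw [Nat.find_eq_iff]
    refine ⟨⟨hp, hb, by rw [hvp, hmin]⟩, fun j hj hcon => ?_⟩
    have : j = p := vv_inj hcon.1 hp (by rw [hcon.2.2, hmin, hvp])
    omega
  rw [hfind, hmin]

lemma hop_DA (π : Equiv.Perm (Fin m)) {x p q : ℕ} (hp : p < m) (hvp : vv π p = x)
    (hA : inA π p) (hbl : ∀ k, q ≤ k → k < p → vv π k < x)
    (hqmin : ∀ j, j < q → ¬ ∀ k, j ≤ k → k < p → vv π k < x) (hqp : q < p) :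
    hop π x p = π * cyc q p hqp.le hp := by
  classical
  have hxm : x < m := hvp ▸ vv_lt hp
  rw [hop, dif_pos ⟨hp, hvp, hxm⟩, dif_pos hA]
  have hfq : Nat.find (qex π x p) = q := by
    rw [Nat.find_eq_iff]; exact ⟨hbl, hqmin⟩
  subst hfq
  rw [dif_pos hqp]

lemma hop_DD (π : Equiv.Perm (Fin m)) {x p r : ℕ} (hp : p < m) (hvp : vv π p = x)
    (hnA : ¬ inA π p) (hpr : p ≤ r) (hrm : r < m) (hrg : x < vv π (r + 1))
    (hrmin : ∀ j, j < r → ¬ (p ≤ j ∧ x < vv π (j + 1))) :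
    hop π x p = π * (cyc p r hpr hrm)⁻¹ := by
  classical
  have hxm : x < m := hvp ▸ vv_lt hp
  rw [hop, dif_pos ⟨hp, hvp, hxm⟩, dif_neg hnA]
  have hfr : Nat.find (rex π x p hxm) = r := by
    rw [Nat.find_eq_iff]; exact ⟨⟨hpr, hrg⟩, hrmin⟩
  subst hfr
  rw [dif_pos ⟨hpr, hrm⟩]

lemma min'_ext {s t : Finset ℕ} (h : s = t) (hs : s.Nonempty) (ht : t.Nonempty) :
    s.min' hs = t.min' ht := by subst h; rfl

theorem Phi_main (π : Equiv.Perm (Fin m)) (hne : (badVals π).Nonempty) :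
    (badVals (Phi π)).Nonempty ∧ Phi (Phi π) = π ∧
      (des (Phi π) = des π + 1 ∨ des π = des (Phi π) + 1) := by
  classical
  obtain ⟨p, hp, hbp, hvp⟩ := pex π hne
  set x := (badVals π).min' hne with hxdef
  by_cases hA : inA π p
  · -- DA case: x hops left
    have hO : outA π p := hbp.1 hA
    set q := Nat.find (qex π x p) with hqdef
    have hbl : ∀ k, q ≤ k → k < p → vv π k < x := Nat.find_spec (qex π x p)
    have hqmin : ∀ j, j < q → ¬ ∀ k, j ≤ k → k < p → vv π k < x :=
      fun j hj => Nat.find_min _ hj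
    have hp0 : 0 < p := hA.1
    have hpm1 : vv π (p - 1) < x := by
      have := hA.2; rw [hvp] at this; rwa [(by omega : p - 1 = p - 1)] at this
    have hqp : q < p := by
      have h1 : q ≤ p - 1 := Nat.find_le (fun k h1 h2 => by
        have hk : k = p - 1 := by omega
        rw [hk]; exact hpm1)
      omega
    have hqmax : q = 0 ∨ x < vv π (q - 1) := by
      rcases Nat.eq_zero_or_pos q with h | h
      · exact Or.inl h
      · right
        have hcon := hqmin (q - 1) (by omega)
        push_neg at hcon
        obtain ⟨k, h1, h2, h3⟩ := hcon
        have hk : k = q - 1 := by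
          by_contra hk
          exact absurd (hbl k (by omega) h2) (by omega)
        rw [← hk]
        have hne2 : vv π k ≠ x := hvp ▸ vv_ne (by omega) hp (by omega)
        omega
    have hPhi : Phi π = π * cyc q p hqp.le hp := by
      rw [Phi_eq_hop π hne hxdef.symm hp hvp hbp]
      exact hop_DA π hp hvp hA hbl hqmin hqp
    have hbadvals : badVals (π * cyc q p hqp.le hp) = badVals π :=
      badVals_rho hqp hp hvp hA hO hbl hqmax
    have hne' : (badVals (π * cyc q p hqp.le hp)).Nonempty := by rw [hbadvals]; exact hne
    have hmin' : (badVals (π * cyc q p hqp.le hp)).min' hne' = x :=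
      min'_ext hbadvals hne' hne
    have hvq : vv (π * cyc q p hqp.le hp) q = x := vv_rho_q hqp hp hvp
    have hqf := bad_rho_at_q hqp hp hvp hbl hqmax
    have hbρq : bad (π * cyc q p hqp.le hp) q := iff_of_false hqf.1 hqf.2
    have hrf := rfind_facts hqp hp hvp hO hbl
    have hPhi2 : Phi (π * cyc q p hqp.le hp) =
        (π * cyc q p hqp.le hp) * (cyc q p hqp.le hp)⁻¹ := by
      rw [Phi_eq_hop (π * cyc q p hqp.le hp) hne' hmin' (by omega) hvq hbρq]
      exact hop_DD _ (by omega) hvq hqf.1 hqp.le hp hrf.2 (fun j hj hcon => by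
        rcases lt_or_ge j q with h | h
        · omega
        · exact rfind_facts hqp hp hvp hO hbl |>.1 j h hj hcon.2)
    rw [hPhi]
    refine ⟨hne', ?_, Or.inl (des_rho hqp hp hvp hA hO hbl hqmax)⟩
    rw [hPhi2, mul_inv_cancel_right]
  · -- DD case: x hops right
    have hnO : ¬ outA π p := fun hO => hA (hbp.2 hO)
    have hxm : x < m := hvp ▸ vv_lt hp
    set r := Nat.find (rex π x p hxm) with hrdef
    have hrsp : p ≤ r ∧ x < vv π (r + 1) := Nat.find_spec (rex π x p hxm)
    have hrmin : ∀ j, j < r → ¬ (p ≤ j ∧ x < vv π (j + 1)) := fun j hj => Nat.find_min _ hj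
    have hp1 : vv π (p + 1) < x := by
      have h1 : ¬ vv π p < vv π (p + 1) := hnO
      rw [hvp] at h1
      rcases lt_or_ge (p + 1) m with h | h
      · have := hvp ▸ vv_ne h hp (by omega)
        omega
      · rw [vv_eq_m h] at h1; omega
    have hrp : p < r := by
      rcases eq_or_lt_of_le hrsp.1 with h | h
      · exfalso
        have h2 := hrsp.2
        rw [← h] at h2
        omega
      · exact h
    have hrm : r < m := by
      have h1 : r ≤ m - 1 := Nat.find_le ⟨by omega, by
        rw [(by omega : m - 1 + 1 = m), vv_eq_m le_rfl]; omega⟩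
      omega
    have hvr1 : vv π r < x := by
      have h1 := hrmin (r - 1) (by omega)
      rw [(by omega : r - 1 + 1 = r)] at h1
      have h2 : ¬ x < vv π r := by
        intro hx2; exact h1 ⟨by omega, hx2⟩
      have hne2 : vv π r ≠ x := hvp ▸ vv_ne hrm hp (by omega)
      omega
    have hvρ : ∀ k, vv (π * (cyc p r hrp.le hrm)⁻¹) k =
        if k = r then x else if p ≤ k ∧ k < r then vv π (k + 1) else vv π k := by
      intro k; rw [vv_mul_cyc_inv, hvp]
    have hxρ : vv (π * (cyc p r hrp.le hrm)⁻¹) r = x := by rw [hvρ, if_pos rfl]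
    have hAρ : inA (π * (cyc p r hrp.le hrm)⁻¹) r := by
      refine ⟨by omega, ?_⟩
      rw [hvρ (r - 1), if_neg (by omega), if_pos (by omega : p ≤ r - 1 ∧ r - 1 < r),
        (by omega : r - 1 + 1 = r), hxρ]
      exact hvr1
    have hOρ : outA (π * (cyc p r hrp.le hrm)⁻¹) r := by
      unfold outA
      rw [hxρ, hvρ (r + 1), if_neg (by omega), if_neg (by omega)]
      exact hrsp.2
    have hblρ : ∀ k, p ≤ k → k < r → vv (π * (cyc p r hrp.le hrm)⁻¹) k < x := by
      intro k h1 h2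
      rw [hvρ k, if_neg (by omega), if_pos ⟨h1, h2⟩]
      have h3 := hrmin k h2
      have h4 : ¬ x < vv π (k + 1) := fun hh => h3 ⟨h1, hh⟩
      have hne2 : vv π (k + 1) ≠ x := hvp ▸ vv_ne (by omega) hp (by omega)
      omega
    have hqmaxρ : p = 0 ∨ x < vv (π * (cyc p r hrp.le hrm)⁻¹) (p - 1) := by
      rcases Nat.eq_zero_or_pos p with h | h
      · exact Or.inl h
      · right
        rw [hvρ (p - 1), if_neg (by omega), if_neg (by omega)]
        have h1 : ¬ (0 < p ∧ vv π (p - 1) < vv π p) := hA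
        rw [hvp] at h1
        have hne2 : vv π (p - 1) ≠ x := hvp ▸ vv_ne (by omega) hp (by omega)
        omega
    have hid : (π * (cyc p r hrp.le hrm)⁻¹) * cyc p r hrp.le hrm = π :=
      inv_mul_cancel_right π _
    have hbadvals : badVals π = badVals (π * (cyc p r hrp.le hrm)⁻¹) := by
      conv_lhs => rw [← hid]
      exact badVals_rho (π := π * (cyc p r hrp.le hrm)⁻¹) hrp hrm hxρ hAρ hOρ hblρ hqmaxρ
    have hne' : (badVals (π * (cyc p r hrp.le hrm)⁻¹)).Nonempty := by
      rw [← hbadvals]; exact hne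
    have hmin' : (badVals (π * (cyc p r hrp.le hrm)⁻¹)).min' hne' = x :=
      min'_ext hbadvals.symm hne' hne
    have hPhi : Phi π = π * (cyc p r hrp.le hrm)⁻¹ := by
      rw [Phi_eq_hop π hne hxdef.symm hp hvp hbp]
      exact hop_DD π hp hvp hA hrp.le hrm hrsp.2 hrmin
    have hbρ : bad (π * (cyc p r hrp.le hrm)⁻¹) r := iff_of_true hAρ hOρ
    have hPhi2 : Phi (π * (cyc p r hrp.le hrm)⁻¹) =
        (π * (cyc p r hrp.le hrm)⁻¹) * cyc p r hrp.le hrm := by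
      rw [Phi_eq_hop (π * (cyc p r hrp.le hrm)⁻¹) hne' hmin' hrm hxρ hbρ]
      refine hop_DA _ hrm hxρ hAρ hblρ (fun j hj hall => ?_) hrp
      have h1 := hall (p - 1) (by omega) (by omega)
      omega
    rw [hPhi]
    refine ⟨hne', by rw [hPhi2, hid], Or.inr ?_⟩
    have hdes := des_rho (π := π * (cyc p r hrp.le hrm)⁻¹) hrp hrm hxρ hAρ hOρ hblρ hqmaxρ
    rw [hid] at hdes
    exact hdes

def P1 (π : Equiv.Perm (Fin m)) : Prop := ∀ i, i + 1 < m → (dsc π i ↔ Odd i)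

lemma not_dsc_last (π : Equiv.Perm (Fin m)) {i : ℕ} (h1 : i < m) (h2 : ¬ i + 1 < m) :
    ¬ dsc π i := by
  rw [dsc_def, vv_eq_m (π := π) (i := i + 1) (by omega)]
  have := vv_lt (π := π) h1
  omega

lemma nobad_iff (hm : m % 2 = 1) (π : Equiv.Perm (Fin m)) :
    (∀ i, i < m → ¬ bad π i) ↔ P1 π := by
  constructor
  · intro h
    intro i hi
    induction i with
    | zero =>
      have h0 := h 0 (by omega)
      unfold bad at h0
      have hA : ¬ inA π 0 := fun hc => absurd hc.1 (lt_irrefl 0)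
      have hO : outA π 0 := by
        by_contra hO
        exact h0 (iff_of_false hA hO)
      have : ¬ dsc π 0 := (outA_iff (by omega)).1 hO
      simp [this, Nat.odd_iff]
    | succ i ih =>
      have hd := ih (by omega)
      have hb := h (i + 1) (by omega)
      unfold bad at hb
      have e1 : inA π (i + 1) ↔ ¬ dsc π i := by
        rw [inA_iff (by omega) (by omega), Nat.add_sub_cancel]
      have e2 : outA π (i + 1) ↔ ¬ dsc π (i + 1) := outA_iff (by omega)
      have key : dsc π (i + 1) ↔ ¬ dsc π i := by tauto
      rw [key, hd, Nat.odd_iff, Nat.odd_iff]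
      omega
  · intro h i hi
    unfold bad
    rcases Nat.eq_zero_or_pos i with h0 | h0
    · subst h0
      have hA : ¬ inA π 0 := fun hc => absurd hc.1 (lt_irrefl 0)
      have hO : outA π 0 := by
        rw [outA_iff (by omega)]
        by_cases h1 : 1 < m
        · rw [h 0 h1]; simp [Nat.odd_iff]
        · exact not_dsc_last π (by omega) (by omega)
      intro hc
      exact hA (hc.2 hO)
    · have e1 : inA π i ↔ ¬ dsc π (i - 1) := inA_iff hi h0
      have e2 : outA π i ↔ ¬ dsc π i := outA_iff hi
      have hd1 : dsc π (i - 1) ↔ Odd (i - 1) := h (i - 1) (by omega)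
      by_cases hlast : i + 1 < m
      · have hd2 := h i hlast
        rw [e1, e2, hd1, hd2, Nat.odd_iff, Nat.odd_iff]
        intro hc
        omega
      · have hd2 : ¬ dsc π i := not_dsc_last π hi hlast
        rw [e1, e2, hd1, Nat.odd_iff]
        intro hc
        have hieq : i = m - 1 := by omega
        have hx := hc.2 hd2
        omega

lemma card_odd_range (n : ℕ) :
    ((Finset.range (2 * n + 1)).filter (fun i => Odd i)).card = n := by
  induction n with
  | zero => decide
  | succ n ih =>
    rw [(by ring : 2 * (n + 1) + 1 = (2 * n + 1) + 1 + 1), Finset.range_add_one,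
      Finset.range_add_one, Finset.filter_insert, if_neg (by rw [Nat.odd_iff]; omega),
      Finset.filter_insert, if_pos (by rw [Nat.odd_iff]; omega),
      Finset.card_insert_of_notMem (by
        simp only [Finset.mem_filter, Finset.mem_range]
        omega)]
    omega

lemma des_P1 {n : ℕ} (hm : m = 2 * n + 1) {π : Equiv.Perm (Fin m)} (h : P1 π) : des π = n := by
  classical
  rw [des_eq]
  have : (Finset.range m).filter (fun i => vv π (i + 1) < vv π i) =
      (Finset.range m).filter (fun i => Odd i) := by
    apply Finset.filter_congr
    intro i hi
    rw [Finset.mem_range] at hi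
    by_cases h1 : i + 1 < m
    · have := h i h1
      rw [dsc_def] at this
      simp only [this]
    · have h2 : ¬ vv π (i + 1) < vv π i := by
        have := not_dsc_last π hi h1
        rwa [dsc_def] at this
      have h3 : ¬ Odd i := by
        rw [Nat.odd_iff]; omega
      simp only [h2, h3]
  rw [this, hm, card_odd_range]

lemma isAlt_iff (π : Equiv.Perm (Fin m)) :
    IsAlternating π ↔ ∀ i, i + 1 < m → (dsc π i ↔ Even i) := by
  unfold IsAlternating
  refine forall_congr' (fun i => forall_congr' (fun h => ?_))
  rw [dsc_def, vv, dif_pos h, vv, dif_pos (by omega)]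
  exact Iff.rfl

def revP (m : ℕ) : Equiv.Perm (Fin m) := Fin.revPerm

lemma vv_rev (π : Equiv.Perm (Fin m)) {i : ℕ} (hi : i < m) :
    vv (revP m * π) i = m - 1 - vv π i := by
  rw [vv, dif_pos hi, vv, dif_pos hi]
  have : (revP m * π) ⟨i, hi⟩ = Fin.rev (π ⟨i, hi⟩) := rfl
  rw [this, Fin.val_rev]
  omega

lemma P1_rev_iff (π : Equiv.Perm (Fin m)) : P1 (revP m * π) ↔ IsAlternating π := by
  rw [isAlt_iff]
  unfold P1
  refine forall_congr' (fun i => forall_congr' (fun h => ?_))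
  have e1 : dsc (revP m * π) i ↔ ¬ dsc π i := by
    rw [dsc_def, dsc_def, vv_rev π (by omega), vv_rev π (by omega)]
    have v1 := vv_lt (π := π) (i := i) (by omega)
    have v2 := vv_lt (π := π) (i := i + 1) (by omega)
    have v3 := vv_ne (π := π) (i := i) (j := i + 1) (by omega) (by omega) (by omega)
    omega
  rw [e1, Nat.odd_iff, Nat.even_iff]
  by_cases h2 : dsc π i <;> simp [h2] <;> omega

lemma rev_rev_perm (π : Equiv.Perm (Fin m)) : revP m * (revP m * π) = π := by
  rw [← mul_assoc]
  convert one_mul π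
  exact Equiv.ext (fun x => Fin.rev_rev x)

lemma notP1_iff (hm : m % 2 = 1) (π : Equiv.Perm (Fin m)) :
    ¬ P1 π ↔ (badVals π).Nonempty := by
  rw [← nobad_iff hm]
  constructor
  · intro h
    push_neg at h
    obtain ⟨i, hi, hb⟩ := h
    exact badVals_nonempty hi hb
  · intro h hc
    obtain ⟨y, hy⟩ := h
    obtain ⟨i, hi, hb, _⟩ := mem_badVals.1 hy
    exact hc i hi hb

end AltProof

/-- E_{2n+1} = (-1)^n A_{2n+1}(-1). -/
theorem euler_eq_eulerian_at_neg_one (n : ℕ) :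
    (eulerNumber (2 * n + 1) : ℝ) = (-1) ^ n * eulerianEval (2 * n + 1) (-1) := by
  classical
  set m := 2 * n + 1 with hmdef
  have hm : m % 2 = 1 := by omega
  have hcard :
      ((Finset.univ : Finset (Equiv.Perm (Fin m))).filter (fun π => AltProof.P1 π)).card
        = eulerNumber m := by
    unfold eulerNumber
    apply Finset.card_nbij' (i := fun π => AltProof.revP m * π)
      (j := fun π => AltProof.revP m * π)
    · intro π hπ
      rw [Finset.mem_coe, Finset.mem_filter] at hπ ⊢
      refine ⟨Finset.mem_univ _, ?_⟩
      rw [← AltProof.P1_rev_iff, AltProof.rev_rev_perm]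
      exact hπ.2
    · intro π hπ
      rw [Finset.mem_coe, Finset.mem_filter] at hπ ⊢
      exact ⟨Finset.mem_univ _, (AltProof.P1_rev_iff π).2 hπ.2⟩
    · intro a _
      exact AltProof.rev_rev_perm a
    · intro a _
      exact AltProof.rev_rev_perm a
  have hsplit := Finset.sum_filter_add_sum_filter_not
    (Finset.univ : Finset (Equiv.Perm (Fin m))) (fun π => AltProof.P1 π)
    (fun π => (-1 : ℝ) ^ des π)
  have hgood : ∑ π ∈ Finset.univ.filter (fun π : Equiv.Perm (Fin m) => AltProof.P1 π),
      (-1 : ℝ) ^ des π = (eulerNumber m : ℝ) * (-1) ^ n := by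
    have hconst : ∀ π ∈ Finset.univ.filter (fun π : Equiv.Perm (Fin m) => AltProof.P1 π),
        (-1 : ℝ) ^ des π = (-1 : ℝ) ^ n := by
      intro π hπ
      rw [AltProof.des_P1 hmdef ((Finset.mem_filter.1 hπ).2)]
    rw [Finset.sum_congr rfl hconst, Finset.sum_const, ← hcard, nsmul_eq_mul]
  have hbad : ∑ π ∈ Finset.univ.filter (fun π : Equiv.Perm (Fin m) => ¬ AltProof.P1 π),
      (-1 : ℝ) ^ des π = 0 := by
    apply Finset.sum_involution (g := fun π _ => AltProof.Phi π)
    · intro π hπ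
      have hne := (AltProof.notP1_iff hm π).1 (Finset.mem_filter.1 hπ).2
      rcases (AltProof.Phi_main π hne).2.2 with h | h
      · rw [h, pow_succ]; ring
      · rw [h, pow_succ]; ring
    · intro π hπ _
      have hne := (AltProof.notP1_iff hm π).1 (Finset.mem_filter.1 hπ).2
      intro heq
      rcases (AltProof.Phi_main π hne).2.2 with h | h <;> rw [heq] at h <;> omega
    · intro π hπ
      have hne := (AltProof.notP1_iff hm π).1 (Finset.mem_filter.1 hπ).2
      rw [Finset.mem_filter]
      exact ⟨Finset.mem_univ _, (AltProof.notP1_iff hm _).2 (AltProof.Phi_main π hne).1⟩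
    · intro π hπ
      have hne := (AltProof.notP1_iff hm π).1 (Finset.mem_filter.1 hπ).2
      exact (AltProof.Phi_main π hne).2.1
  have hmain : eulerianEval m (-1) = (eulerNumber m : ℝ) * (-1) ^ n := by
    rw [eulerianEval, ← hsplit, hgood, hbad, add_zero]
  rw [hmain]
  have h1 : ((-1 : ℝ)) ^ n * (-1) ^ n = 1 := by
    rw [← pow_add]
    exact Even.neg_one_pow ⟨n, by ring⟩
  rw [mul_comm ((-1 : ℝ) ^ n), mul_assoc, h1, mul_one]
end

section
/- For any n ≥ 1, A_n(p,1) = (n!/2^{⌊n/2⌋}) · (1+p)^{⌊n/2⌋}, where A_n(p,q) = Σ_{π ∈ S_n} p^{odes(π)} q^{edes(π)}. -/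
open Finset

private lemma odes_eq{n : ℕ} (π : Equiv.Perm (Fin n)) :
    odes π = ((Finset.range (n/2)).filter
      (fun j => ∃ h : 2*j+1 < n, π ⟨2*j+1, h⟩ < π ⟨2*j, Nat.lt_of_succ_lt h⟩)).card := by
  classical
  unfold odes descentSet
  rw [Finset.filter_filter]
  apply Finset.card_bij' (fun i _ => i / 2) (fun j _ => 2 * j)
  case hi =>
    intro i hi
    simp only [Finset.mem_filter, Finset.mem_range] at hi ⊢
    obtain ⟨hin, ⟨h1, hlt⟩, heven⟩ := hi
    obtain ⟨j, rfl⟩ := heven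
    refine ⟨by omega, by omega, ?_⟩
    convert hlt using 3 <;> omega
  case hj =>
    intro j hj
    simp only [Finset.mem_filter, Finset.mem_range] at hj ⊢
    obtain ⟨hjm, h1, hlt⟩ := hj
    exact ⟨by omega, ⟨h1, hlt⟩, ⟨j, by ring⟩⟩
  case left_inv =>
    intro i hi
    simp only [Finset.mem_filter, Finset.mem_range] at hi
    obtain ⟨_, _, heven⟩ := hi
    obtain ⟨j, rfl⟩ := heven
    omega
  case right_inv =>
    intro j _
    omega

section
variable {n : ℕ}

private lemma key(p : ℝ) : ∀ k, k ≤ n/2 →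
    (∑ π : Equiv.Perm (Fin n), ∏ j ∈ Finset.range k,
      (if (∃ h : 2*j+1 < n, π ⟨2*j+1, h⟩ < π ⟨2*j, Nat.lt_of_succ_lt h⟩) then p else 1))
      = (n.factorial : ℝ) * ((1+p)/2)^k := by
  intro k
  induction k with
  | zero =>
      intro _
      simp [Finset.card_univ, Fintype.card_perm]
  | succ k ih =>
      intro hk
      have hkm : k ≤ n / 2 := by omega
      have h2k1 : 2*k+1 < n := by omega
      set a : Fin n := ⟨2*k, Nat.lt_of_succ_lt h2k1⟩ with ha
      set b : Fin n := ⟨2*k+1, h2k1⟩ with hb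
      have hab : a ≠ b := by simp [ha, hb, Fin.ext_iff]
      set τ := Equiv.swap a b with hτ
      set D : Equiv.Perm (Fin n) → ℕ → Prop := fun π j =>
        (∃ h : 2*j+1 < n, π ⟨2*j+1, h⟩ < π ⟨2*j, Nat.lt_of_succ_lt h⟩) with hD
      set g : Equiv.Perm (Fin n) → ℝ := fun π => ∏ j ∈ Finset.range k,
        (if D π j then p else 1) with hg
      set f : Equiv.Perm (Fin n) → ℝ := fun π => ∏ j ∈ Finset.range (k+1),
        (if D π j then p else 1) with hf
      -- facts about τ
      have hτa : τ a = b := Equiv.swap_apply_left a b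
      have hτb : τ b = a := Equiv.swap_apply_right a b
      have hgτ : ∀ π : Equiv.Perm (Fin n), g (π * τ) = g π := by
        intro π
        apply Finset.prod_congr rfl
        intro j hj
        rw [Finset.mem_range] at hj
        have h2j1 : 2*j+1 < n := by omega
        have e1 : τ ⟨2*j+1, h2j1⟩ = ⟨2*j+1, h2j1⟩ :=
          Equiv.swap_apply_of_ne_of_ne (by simp [ha, Fin.ext_iff]; omega)
            (by simp [hb, Fin.ext_iff]; omega)
        have e2 : τ ⟨2*j, Nat.lt_of_succ_lt h2j1⟩ = ⟨2*j, Nat.lt_of_succ_lt h2j1⟩ :=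
          Equiv.swap_apply_of_ne_of_ne (by simp [ha, Fin.ext_iff]; omega)
            (by simp [hb, Fin.ext_iff]; omega)
        have : D (π * τ) j ↔ D π j := by
          simp only [hD]
          constructor
          · rintro ⟨h, hlt⟩
            refine ⟨h, ?_⟩
            simpa [Equiv.Perm.mul_apply, e1, e2] using hlt
          · rintro ⟨h, hlt⟩
            refine ⟨h, ?_⟩
            simpa [Equiv.Perm.mul_apply, e1, e2] using hlt
        simp [this]
      have hDk : ∀ π : Equiv.Perm (Fin n), D (π * τ) k ↔ ¬ D π k := by
        intro π
        have hne : π a ≠ π b := fun h => hab (π.injective h)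
        simp only [hD]
        have hea : (⟨2*k, Nat.lt_of_succ_lt h2k1⟩ : Fin n) = a := rfl
        have heb : (⟨2*k+1, h2k1⟩ : Fin n) = b := rfl
        constructor
        · rintro ⟨h, hlt⟩ ⟨h', hlt'⟩
          rw [Equiv.Perm.mul_apply, Equiv.Perm.mul_apply] at hlt
          rw [heb, hea, hτa, hτb] at hlt
          rw [heb, hea] at hlt'
          exact absurd (hlt.trans hlt') (lt_irrefl _)
        · intro hnot
          refine ⟨h2k1, ?_⟩
          rw [Equiv.Perm.mul_apply, Equiv.Perm.mul_apply, heb, hea, hτa, hτb]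
          rcases lt_or_gt_of_ne hne with h | h
          · exact h
          · exact absurd ⟨h2k1, h⟩ hnot
      have hsum : ∑ π : Equiv.Perm (Fin n), f (π * τ) = ∑ π : Equiv.Perm (Fin n), f π :=
        Fintype.sum_equiv (Equiv.mulRight τ) _ _ (fun π => rfl)
      have hpair : ∀ π : Equiv.Perm (Fin n), f π + f (π * τ) = g π * (p + 1) := by
        intro π
        have hg1 : f π = g π * (if D π k then p else 1) := Finset.prod_range_succ _ _
        have hg2 : f (π * τ) = g π * (if D (π * τ) k then p else 1) := by
          have h0 : f (π * τ) = g (π * τ) * (if D (π * τ) k then p else 1) :=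
            Finset.prod_range_succ _ _
          rw [h0, hgτ]
        rw [hg1, hg2]
        by_cases hd : D π k
        · rw [if_pos hd, if_neg (by rw [hDk]; exact not_not_intro hd)]
          ring
        · rw [if_neg hd, if_pos ((hDk π).mpr hd)]
          ring
      have h2 : 2 * ∑ π : Equiv.Perm (Fin n), f π
          = (∑ π : Equiv.Perm (Fin n), g π) * (p + 1) := by
        rw [two_mul]
        nth_rewrite 2 [← hsum]
        rw [← Finset.sum_add_distrib, Finset.sum_mul]
        exact Finset.sum_congr rfl fun π _ => hpair π
      have hgval : (∑ π : Equiv.Perm (Fin n), g π) = (n.factorial : ℝ) * ((1+p)/2)^k :=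
        ih hkm
      have : (∑ π : Equiv.Perm (Fin n), f π)
          = (n.factorial : ℝ) * ((1+p)/2)^(k+1) := by
        have h3 := h2
        rw [hgval] at h3
        have hr : (n.factorial : ℝ) * ((1+p)/2)^(k+1) * 2
            = (n.factorial : ℝ) * ((1+p)/2)^k * (p+1) := by ring
        linarith [h3, hr]
      exact this

end

/-- A_n(p,1) = (n!/2^{⌊n/2⌋})(1+p)^{⌊n/2⌋}. -/
theorem refinedEulerian_q_one (n : ℕ) (hn : 1 ≤ n) (p : ℝ) :
    refinedEulerian n p 1 = ((n.factorial : ℝ) / 2 ^ (n / 2)) * (1 + p) ^ (n / 2) := by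
  classical
  have hm := key (n := n) p (n/2) le_rfl
  unfold refinedEulerian
  simp only [one_pow, mul_one]
  have hterm : ∀ π : Equiv.Perm (Fin n), (p : ℝ) ^ odes π
      = ∏ j ∈ Finset.range (n/2),
        (if (∃ h : 2*j+1 < n, π ⟨2*j+1, h⟩ < π ⟨2*j, Nat.lt_of_succ_lt h⟩) then p else 1) := by
    intro π
    rw [odes_eq, ← Finset.prod_const, Finset.prod_filter]
  rw [Finset.sum_congr rfl (fun π _ => hterm π), hm, div_pow]
  ring
end

section
/- For any n ≥ 1, A_n(1,q) = (n!/2^{⌊(n-1)/2⌋}) · (1+q)^{⌊(n-1)/2⌋}, where A_n(p,q) = Σ_{π ∈ S_n} p^{odes(π)} q^{edes(π)}. -/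
open Finset

/-- The toggling involution: swaps entries `i, i+1` for each `i ∈ S`. -/
def gfun (n : ℕ) (S : Finset ℕ) (hS : ∀ i ∈ S, i + 1 < n) (x : Fin n) : Fin n :=
  if h : (x : ℕ) ∈ S then ⟨(x : ℕ) + 1, hS _ h⟩
  else if ((x : ℕ) - 1 ∈ S ∧ 1 ≤ (x : ℕ)) then
    ⟨(x : ℕ) - 1, lt_of_le_of_lt (Nat.sub_le _ _) x.2⟩
  else x

lemma gfun_invol (n : ℕ) (S : Finset ℕ) (hS : ∀ i ∈ S, i + 1 < n)
    (hO : ∀ i ∈ S, Odd i) : Function.Involutive (gfun n S hS) := by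
  intro x
  unfold gfun
  by_cases h1 : (x : ℕ) ∈ S
  · have hodd := hO _ h1
    have h2 : (x : ℕ) + 1 ∉ S := fun hm => by
      have := hO _ hm; obtain ⟨a, ha⟩ := hodd; obtain ⟨b, hb⟩ := this; omega
    simp only [h1, dif_pos, h2, dif_neg, not_false_iff]
    have h3 : ((x : ℕ) + 1 - 1 ∈ S ∧ 1 ≤ (x : ℕ) + 1) := by simpa using h1
    rw [if_pos h3]
    exact Fin.ext (by simp)
  · by_cases h2 : ((x : ℕ) - 1 ∈ S ∧ 1 ≤ (x : ℕ))
    · rw [dif_neg h1, if_pos h2, dif_pos (show (((⟨(x:ℕ)-1, lt_of_le_of_lt (Nat.sub_le _ _) x.2⟩ : Fin n) : ℕ) ∈ S) from h2.1)]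
      exact Fin.ext (by simp [Nat.sub_add_cancel h2.2])
    · rw [dif_neg h1, if_neg h2, dif_neg h1, if_neg h2]

noncomputable def sigmaPerm (n : ℕ) (S : Finset ℕ) (hS : ∀ i ∈ S, i + 1 < n)
    (hO : ∀ i ∈ S, Odd i) : Equiv.Perm (Fin n) :=
  Function.Involutive.toPerm _ (gfun_invol n S hS hO)

lemma mem_descentSet_iff {n : ℕ} (π : Equiv.Perm (Fin n)) {j : ℕ} (hj : j + 1 < n) :
    j ∈ descentSet π ↔ π ⟨j + 1, hj⟩ < π ⟨j, Nat.lt_of_succ_lt hj⟩ := by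
  simp only [descentSet, mem_filter, mem_range]
  exact ⟨fun ⟨_, _, h⟩ => h, fun h => ⟨Nat.lt_of_succ_lt hj, hj, h⟩⟩

lemma mem_descentSet_lt {n : ℕ} (π : Equiv.Perm (Fin n)) {j : ℕ}
    (h : j ∈ descentSet π) : j + 1 < n := by
  simp only [descentSet, mem_filter, mem_range] at h
  exact h.2.1

lemma descent_toggle (n : ℕ) (S : Finset ℕ) (hS : ∀ i ∈ S, i + 1 < n)
    (hO : ∀ i ∈ S, Odd i) (π : Equiv.Perm (Fin n)) {j : ℕ} (hjo : Odd j) (hj : j + 1 < n) :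
    (j ∈ descentSet (π * sigmaPerm n S hS hO) ↔ ((j ∈ S) ↔ j ∉ descentSet π)) := by
  have hjn := Nat.lt_of_succ_lt hj
  rw [mem_descentSet_iff _ hj, mem_descentSet_iff π hj]
  have hne : π ⟨j + 1, hj⟩ ≠ π ⟨j, hjn⟩ := by
    intro h; have := π.injective h; simp [Fin.ext_iff] at this
  by_cases hjS : j ∈ S
  · have h1 : sigmaPerm n S hS hO ⟨j, hjn⟩ = ⟨j + 1, hj⟩ := by
      show gfun n S hS _ = _
      unfold gfun; rw [dif_pos (show ((⟨j, hjn⟩ : Fin n) : ℕ) ∈ S from hjS)]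
    have hj1S : j + 1 ∉ S := fun hm => by
      have := hO _ hm; obtain ⟨a, ha⟩ := hjo; obtain ⟨b, hb⟩ := this; omega
    have h2 : sigmaPerm n S hS hO ⟨j + 1, hj⟩ = ⟨j, hjn⟩ := by
      show gfun n S hS _ = _
      unfold gfun
      rw [dif_neg (show ¬((⟨j + 1, hj⟩ : Fin n) : ℕ) ∈ S from hj1S),
        if_pos (show ((⟨j + 1, hj⟩ : Fin n) : ℕ) - 1 ∈ S ∧ 1 ≤ ((⟨j + 1, hj⟩ : Fin n) : ℕ) by
          simpa using hjS)]
      exact Fin.ext (by simp)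
    simp only [Equiv.Perm.mul_apply, h1, h2, hjS, true_iff, iff_true]
    constructor
    · intro h hlt; exact absurd (lt_trans h hlt) (lt_irrefl _)
    · intro h; rcases lt_or_gt_of_ne hne with h' | h'
      · exact absurd h' h
      · exact h'
  · have hj1S : j + 1 ∉ S := fun hm => by
      have := hO _ hm; obtain ⟨a, ha⟩ := hjo; obtain ⟨b, hb⟩ := this; omega
    have hjm1 : j - 1 ∉ S := fun hm => by
      have := hO _ hm; obtain ⟨a, ha⟩ := hjo; obtain ⟨b, hb⟩ := this; omega
    have h1 : sigmaPerm n S hS hO ⟨j, hjn⟩ = ⟨j, hjn⟩ := by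
      show gfun n S hS _ = _
      unfold gfun
      rw [dif_neg (show ¬((⟨j, hjn⟩ : Fin n) : ℕ) ∈ S from hjS),
        if_neg (fun hc => hjm1 hc.1)]
    have h2 : sigmaPerm n S hS hO ⟨j + 1, hj⟩ = ⟨j + 1, hj⟩ := by
      show gfun n S hS _ = _
      unfold gfun
      rw [dif_neg (show ¬((⟨j + 1, hj⟩ : Fin n) : ℕ) ∈ S from hj1S),
        if_neg (fun hc => hjS (by simpa using hc.1))]
    simp only [Equiv.Perm.mul_apply, h1, h2, hjS, false_iff, not_not]

lemma Phi_toggle (n : ℕ) (S : Finset ℕ) (hS : ∀ i ∈ S, i + 1 < n)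
    (hO : ∀ i ∈ S, Odd i) (π : Equiv.Perm (Fin n)) :
    (descentSet (π * sigmaPerm n S hS hO)).filter (fun i => Odd i) =
      symmDiff ((descentSet π).filter (fun i => Odd i)) S := by
  ext j
  simp only [mem_filter, Finset.mem_symmDiff, mem_filter]
  by_cases hjo : Odd j
  · by_cases hj : j + 1 < n
    · have := descent_toggle n S hS hO π hjo hj
      tauto
    · have h1 : j ∉ descentSet (π * sigmaPerm n S hS hO) := fun h => hj (mem_descentSet_lt _ h)
      have h2 : j ∉ descentSet π := fun h => hj (mem_descentSet_lt _ h)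
      have h3 : j ∉ S := fun h => hj (hS _ h)
      tauto
  · have h3 : j ∉ S := fun h => hjo (hO _ h)
    tauto

lemma sigma_sq (n : ℕ) (S : Finset ℕ) (hS : ∀ i ∈ S, i + 1 < n)
    (hO : ∀ i ∈ S, Odd i) (π : Equiv.Perm (Fin n)) :
    (π * sigmaPerm n S hS hO) * sigmaPerm n S hS hO = π := by
  ext x
  simp only [Equiv.Perm.mul_apply, sigmaPerm, Function.Involutive.coe_toPerm]
  rw [gfun_invol n S hS hO x]

lemma card_odd_range (m : ℕ) : ((range m).filter (fun i => Odd i)).card = m / 2 := by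
  induction m with
  | zero => simp
  | succ k ih =>
    rw [range_add_one, filter_insert]
    by_cases h : Odd k
    · rw [if_pos h, card_insert_of_notMem (by simp)]
      obtain ⟨a, ha⟩ := h; omega
    · rw [if_neg h]
      rw [Nat.not_odd_iff_even] at h; obtain ⟨a, ha⟩ := h; omega

/-- A_n(1,q) = (n!/2^{⌊(n-1)/2⌋})(1+q)^{⌊(n-1)/2⌋}. -/
theorem refinedEulerian_p_one (n : ℕ) (hn : 1 ≤ n) (q : ℝ) :
    refinedEulerian n 1 q = ((n.factorial : ℝ) / 2 ^ ((n - 1) / 2)) * (1 + q) ^ ((n - 1) / 2) := by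
  classical
  set m := (n - 1) / 2 with hm
  set D : Finset ℕ := (range n).filter (fun i => Odd i ∧ i + 1 < n) with hD
  have hDcard : D.card = m := by
    have hDeq : D = (range (n - 1)).filter (fun i => Odd i) := by
      ext i; simp only [hD, mem_filter, mem_range]
      constructor
      · rintro ⟨_, h2, h3⟩; exact ⟨by omega, h2⟩
      · rintro ⟨h1, h2⟩; exact ⟨by omega, h2, by omega⟩
    rw [hDeq, card_odd_range]
  set Φ : Equiv.Perm (Fin n) → Finset ℕ :=
    fun π => (descentSet π).filter (fun i => Odd i) with hΦ
  have hΦD : ∀ π : Equiv.Perm (Fin n), Φ π ∈ D.powerset := by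
    intro π
    rw [mem_powerset]
    intro j hj
    simp only [hΦ, mem_filter] at hj
    simp only [hD, mem_filter, mem_range]
    exact ⟨Nat.lt_of_succ_lt (mem_descentSet_lt _ hj.1), hj.2, mem_descentSet_lt _ hj.1⟩
  set N := (univ.filter (fun π : Equiv.Perm (Fin n) => Φ π = ∅)).card with hN
  have hfiber : ∀ S ∈ D.powerset,
      (univ.filter (fun π : Equiv.Perm (Fin n) => Φ π = S)).card = N := by
    intro S hSmem
    rw [mem_powerset] at hSmem
    have hS : ∀ i ∈ S, i + 1 < n := fun i hi => ((mem_filter.1 (hSmem hi)).2).2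
    have hO : ∀ i ∈ S, Odd i := fun i hi => ((mem_filter.1 (hSmem hi)).2).1
    rw [hN]
    apply Finset.card_bij' (fun π _ => π * sigmaPerm n S hS hO)
      (fun π _ => π * sigmaPerm n S hS hO)
    · intro π hπ
      simp only [mem_filter, mem_univ, true_and] at hπ ⊢
      show (descentSet (π * sigmaPerm n S hS hO)).filter (fun i => Odd i) = ∅
      rw [Phi_toggle, show (descentSet π).filter (fun i => Odd i) = S from hπ]
      rw [symmDiff_self]; rfl
    · intro π hπ
      simp only [mem_filter, mem_univ, true_and] at hπ ⊢
      show (descentSet (π * sigmaPerm n S hS hO)).filter (fun i => Odd i) = S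
      rw [Phi_toggle, show (descentSet π).filter (fun i => Odd i) = ∅ from hπ]
      rw [show (∅ : Finset ℕ) = (⊥ : Finset ℕ) from rfl, bot_symmDiff]
    · intro π _; exact sigma_sq n S hS hO π
    · intro π _; exact sigma_sq n S hS hO π
  have hsum : refinedEulerian n 1 q = ∑ S ∈ D.powerset, (N : ℝ) * q ^ S.card := by
    rw [refinedEulerian]
    simp only [one_pow, one_mul]
    rw [← Finset.sum_fiberwise_of_maps_to (g := Φ) (fun π _ => hΦD π)
      (fun π => (q : ℝ) ^ edes π)]
    refine Finset.sum_congr rfl fun S hSmem => ?_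
    rw [← hfiber S hSmem]
    rw [Finset.sum_congr rfl (fun π hπ => show (q : ℝ) ^ edes π = q ^ S.card by
      rw [show edes π = (Φ π).card from rfl, (mem_filter.1 hπ).2]),
      Finset.sum_const, nsmul_eq_mul]
  have hcardtot : n.factorial = 2 ^ m * N := by
    have h1 : (univ : Finset (Equiv.Perm (Fin n))).card =
        ∑ S ∈ D.powerset, (univ.filter (fun π => Φ π = S)).card :=
      Finset.card_eq_sum_card_fiberwise (fun π _ => hΦD π)
    rw [Finset.card_univ, Fintype.card_perm, Fintype.card_fin] at h1
    rw [h1, Finset.sum_congr rfl hfiber, Finset.sum_const, card_powerset, hDcard, smul_eq_mul]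
  have hpow : ∑ S ∈ D.powerset, (q : ℝ) ^ S.card = (1 + q) ^ m := by
    have hpa := Finset.prod_add (fun _ : ℕ => q) (fun _ : ℕ => (1 : ℝ)) D
    simp only [Finset.prod_const, Finset.prod_const_one, one_pow, mul_one] at hpa
    rw [← hDcard, ← add_comm q 1, ← hpa]
  calc refinedEulerian n 1 q = ∑ S ∈ D.powerset, (N : ℝ) * q ^ S.card := hsum
    _ = (N : ℝ) * ∑ S ∈ D.powerset, q ^ S.card := by rw [Finset.mul_sum]
    _ = (N : ℝ) * (1 + q) ^ m := by rw [hpow]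
    _ = ((n.factorial : ℝ) / 2 ^ m) * (1 + q) ^ m := by
        have hcast : (n.factorial : ℝ) = 2 ^ m * N := by exact_mod_cast hcardtot
        rw [hcast, mul_comm ((2 : ℝ) ^ m) (N : ℝ), mul_div_assoc,
          div_self (by positivity), mul_one]
end

section
/- For n ≥ 1, the refined Eulerian polynomials satisfy A_{2n}(p,q) = (1+p)·A_{2n-1}(p,q) + (p+q)·Σ_{i=1}^{n-1} C(2n-1, 2i-1) · A_{2i-1}(p,q) · A_{2n-2i}(p,q), where C(a,b) is the binomial coefficient. -/
open Finset

lemma mem_descentSet {n : ℕ} (π : Equiv.Perm (Fin n)) (i : ℕ) :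
    i ∈ descentSet π ↔ ∃ h : i + 1 < n, π ⟨i + 1, h⟩ < π ⟨i, Nat.lt_of_succ_lt h⟩ := by
  unfold descentSet
  rw [Finset.mem_filter]
  constructor
  · rintro ⟨-, h⟩; exact h
  · rintro ⟨h, hd⟩; exact ⟨Finset.mem_range.2 (Nat.lt_of_succ_lt h), h, hd⟩

lemma refinedEulerian_zero (p q : ℝ) : refinedEulerian 0 p q = 1 := by
  simp [refinedEulerian, odes, edes, descentSet]

/-- reverse-complement symmetry: for odd length, swapping p,q is harmless -/
lemma refinedEulerian_symm (m : ℕ) (p q : ℝ) :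
    refinedEulerian (2 * m + 1) p q = refinedEulerian (2 * m + 1) q p := by
  unfold refinedEulerian
  rw [← Equiv.sum_comp (Equiv.mulLeft (Fin.revPerm : Equiv.Perm (Fin (2*m+1)))
      |>.trans (Equiv.mulRight (Fin.revPerm : Equiv.Perm (Fin (2*m+1)))))]
  apply Finset.sum_congr rfl
  intro π _
  have hds : descentSet ((Fin.revPerm * π) * Fin.revPerm)
      = (descentSet π).image (fun j => 2 * m - 1 - j) := by
    ext i
    simp only [mem_descentSet, Finset.mem_image]
    constructor
    · rintro ⟨h, hd⟩
      refine ⟨2 * m - 1 - i, ⟨by omega, ?_⟩, by omega⟩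
      simp only [Equiv.Perm.mul_apply, Fin.revPerm_apply, Fin.rev_lt_rev] at hd
      convert hd using 2 <;> ext <;> simp [Fin.val_rev] <;> omega
    · rintro ⟨j, hj, rfl⟩
      obtain ⟨hjlt, hd⟩ := hj
      refine ⟨by omega, ?_⟩
      simp only [Equiv.Perm.mul_apply, Fin.revPerm_apply, Fin.rev_lt_rev]
      convert hd using 2 <;> ext <;> simp [Fin.val_rev] <;> omega
  have hub : ∀ j ∈ descentSet π, j < 2 * m := by
    intro j hj
    rw [mem_descentSet] at hj
    obtain ⟨h, -⟩ := hj
    omega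
  have hinj : Set.InjOn (fun j => 2 * m - 1 - j) (descentSet π : Set ℕ) := by
    intro x hx y hy hxy
    have hx2 := hub x (Finset.mem_coe.1 hx); have := hub y (Finset.mem_coe.1 hy)
    simp only at hxy
    omega
  have hparE : ∀ a ∈ descentSet π, (Even (2 * m - 1 - a) ↔ Odd a) := by
    intro a ha
    have := hub a ha
    rw [Nat.even_iff, Nat.odd_iff]
    constructor <;> intro <;> omega
  have hparO : ∀ a ∈ descentSet π, (Odd (2 * m - 1 - a) ↔ Even a) := by
    intro a ha
    have := hub a ha
    rw [Nat.even_iff, Nat.odd_iff]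
    constructor <;> intro <;> omega
  have ho : odes (Fin.revPerm * π * Fin.revPerm) = edes π := by
    unfold odes edes
    rw [hds, Finset.filter_image,
      Finset.card_image_of_injOn (hinj.mono (Finset.coe_subset.mpr (Finset.filter_subset _ _)))]
    congr 1
    exact Finset.filter_congr hparE
  have he : edes (Fin.revPerm * π * Fin.revPerm) = odes π := by
    unfold odes edes
    rw [hds, Finset.filter_image,
      Finset.card_image_of_injOn (hinj.mono (Finset.coe_subset.mpr (Finset.filter_subset _ _)))]
    congr 1
    exact Finset.filter_congr hparO
  simp only [Equiv.trans_apply, Equiv.coe_mulLeft, Equiv.coe_mulRight]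
  rw [ho, he, mul_comm]

section Insertion

variable (a b : ℕ) (S : Finset (Fin (a+b))) (hS : S.card = a) (hS' : Sᶜ.card = b)
  (σ : Equiv.Perm (Fin a)) (τ : Equiv.Perm (Fin b))

def insFun : Fin (a+b+1) → Fin (a+b+1) :=
  fun i =>
    if h : (i : ℕ) < a then Fin.castSucc ((S.orderIsoOfFin hS) (σ ⟨i, h⟩) : Fin (a+b))
    else if h2 : (i : ℕ) = a then Fin.last (a+b)
    else Fin.castSucc ((Sᶜ.orderIsoOfFin hS') (τ ⟨(i : ℕ) - a - 1, by
      have := i.isLt; omega⟩) : Fin (a+b))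

lemma insFun_lt {i : Fin (a+b+1)} (h : (i : ℕ) < a) :
    insFun a b S hS hS' σ τ i = Fin.castSucc ((S.orderIsoOfFin hS) (σ ⟨i, h⟩) : Fin (a+b)) := by
  simp only [insFun]
  rw [dif_pos h]

lemma insFun_mid {i : Fin (a+b+1)} (h : (i : ℕ) = a) :
    insFun a b S hS hS' σ τ i = Fin.last (a+b) := by
  simp only [insFun]
  rw [dif_neg (by omega), dif_pos h]

lemma insFun_gt {i : Fin (a+b+1)} (h : a < (i : ℕ)) (hj : (i : ℕ) - a - 1 < b) :
    insFun a b S hS hS' σ τ i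
      = Fin.castSucc ((Sᶜ.orderIsoOfFin hS') (τ ⟨(i : ℕ) - a - 1, hj⟩) : Fin (a+b)) := by
  simp only [insFun]
  rw [dif_neg (by omega), dif_neg (by omega)]

lemma insFun_inj : Function.Injective (insFun a b S hS hS' σ τ) := by
  intro x y hxy
  have hx := x.isLt
  have hy := y.isLt
  rcases lt_trichotomy (x : ℕ) a with h1 | h1 | h1 <;>
    rcases lt_trichotomy (y : ℕ) a with h2 | h2 | h2
  · rw [insFun_lt a b S hS hS' σ τ h1, insFun_lt a b S hS hS' σ τ h2] at hxy
    have := Fin.castSucc_injective _ hxy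
    have := (S.orderIsoOfFin hS).injective (Subtype.coe_injective this)
    have := σ.injective this
    have h4 : (x : ℕ) = (y : ℕ) := by
      have := congrArg Fin.val this
      simpa using this
    exact Fin.ext h4
  · rw [insFun_lt a b S hS hS' σ τ h1, insFun_mid a b S hS hS' σ τ h2] at hxy
    exact absurd hxy (Fin.ne_of_lt (Fin.castSucc_lt_last _))
  · rw [insFun_lt a b S hS hS' σ τ h1,
      insFun_gt a b S hS hS' σ τ h2 (by omega)] at hxy
    have h3 := Fin.castSucc_injective _ hxy
    have m1 := ((S.orderIsoOfFin hS) (σ ⟨x, h1⟩)).2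
    have m2 := ((Sᶜ.orderIsoOfFin hS') (τ ⟨(y:ℕ) - a - 1, by omega⟩)).2
    rw [h3] at m1
    exact absurd m1 (Finset.mem_compl.1 m2)
  · rw [insFun_mid a b S hS hS' σ τ h1, insFun_lt a b S hS hS' σ τ h2] at hxy
    exact absurd hxy.symm (Fin.ne_of_lt (Fin.castSucc_lt_last _))
  · exact Fin.ext (h1.trans h2.symm)
  · rw [insFun_mid a b S hS hS' σ τ h1,
      insFun_gt a b S hS hS' σ τ h2 (by omega)] at hxy
    exact absurd hxy.symm (Fin.ne_of_lt (Fin.castSucc_lt_last _))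
  · rw [insFun_gt a b S hS hS' σ τ h1 (by omega),
      insFun_lt a b S hS hS' σ τ h2] at hxy
    have h3 := Fin.castSucc_injective _ hxy
    have m1 := ((Sᶜ.orderIsoOfFin hS') (τ ⟨(x:ℕ) - a - 1, by omega⟩)).2
    have m2 := ((S.orderIsoOfFin hS) (σ ⟨y, h2⟩)).2
    rw [h3] at m1
    exact absurd m2 (Finset.mem_compl.1 m1)
  · rw [insFun_gt a b S hS hS' σ τ h1 (by omega),
      insFun_mid a b S hS hS' σ τ h2] at hxy
    exact absurd hxy (Fin.ne_of_lt (Fin.castSucc_lt_last _))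
  · rw [insFun_gt a b S hS hS' σ τ h1 (by omega),
      insFun_gt a b S hS hS' σ τ h2 (by omega)] at hxy
    have h3 := Fin.castSucc_injective _ hxy
    have := (Sᶜ.orderIsoOfFin hS').injective (Subtype.coe_injective h3)
    have := τ.injective this
    have h4 : (x : ℕ) - a - 1 = (y : ℕ) - a - 1 := by
      have := congrArg Fin.val this
      simpa using this
    exact Fin.ext (by omega)

noncomputable def insPerm : Equiv.Perm (Fin (a+b+1)) :=
  Equiv.ofBijective _ ((Finite.injective_iff_bijective).1 (insFun_inj a b S hS hS' σ τ))

lemma insPerm_apply (i : Fin (a+b+1)) :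
    insPerm a b S hS hS' σ τ i = insFun a b S hS hS' σ τ i := rfl

end Insertion

section Insertion2

variable (a b : ℕ) (S : Finset (Fin (a+b))) (hS : S.card = a) (hS' : Sᶜ.card = b)
  (σ : Equiv.Perm (Fin a)) (τ : Equiv.Perm (Fin b))

lemma mem_descentSet_insPerm (i : ℕ) :
    i ∈ descentSet (insPerm a b S hS hS' σ τ) ↔
      (i ∈ descentSet σ ∨ ((b ≠ 0 ∧ i = a) ∨ ∃ j ∈ descentSet τ, i = a + 1 + j)) := by
  rcases Nat.lt_trichotomy (i+1) a with h1 | h1 | h1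
  · -- i + 1 < a : descent of σ
    have hRmid : ¬ (b ≠ 0 ∧ i = a) := by rintro ⟨-, rfl⟩; omega
    have hRright : ¬ ∃ j ∈ descentSet τ, i = a + 1 + j := by
      rintro ⟨j, -, rfl⟩; omega
    simp only [hRmid, hRright, or_false, false_or]
    rw [mem_descentSet, mem_descentSet]
    constructor
    · rintro ⟨h, hd⟩
      refine ⟨h1, ?_⟩
      rw [insPerm_apply, insPerm_apply,
        insFun_lt a b S hS hS' σ τ (i := ⟨i+1, h⟩) (by show i + 1 < a; omega),
        insFun_lt a b S hS hS' σ τ (i := ⟨i, by omega⟩) (by show i < a; omega)] at hd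
      rw [Fin.castSucc_lt_castSucc_iff, Subtype.coe_lt_coe, OrderIso.lt_iff_lt] at hd
      exact hd
    · rintro ⟨h, hd⟩
      refine ⟨by omega, ?_⟩
      rw [insPerm_apply, insPerm_apply,
        insFun_lt a b S hS hS' σ τ (i := ⟨i+1, by omega⟩) (by show i + 1 < a; omega),
        insFun_lt a b S hS hS' σ τ (i := ⟨i, by omega⟩) (by show i < a; omega)]
      rw [Fin.castSucc_lt_castSucc_iff, Subtype.coe_lt_coe, OrderIso.lt_iff_lt]
      exact hd
  · -- i + 1 = a : never a descent
    have hRmid : ¬ (b ≠ 0 ∧ i = a) := by rintro ⟨-, rfl⟩; omega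
    have hRright : ¬ ∃ j ∈ descentSet τ, i = a + 1 + j := by
      rintro ⟨j, -, rfl⟩; omega
    have hRleft : i ∉ descentSet σ := by
      rw [mem_descentSet]; rintro ⟨h, -⟩; omega
    simp only [hRmid, hRright, hRleft, or_false, false_or, iff_false]
    rw [mem_descentSet]
    rintro ⟨h, hd⟩
    rw [insPerm_apply, insPerm_apply,
      insFun_mid a b S hS hS' σ τ (i := ⟨i+1, h⟩) (by show i + 1 = a; omega),
      insFun_lt a b S hS hS' σ τ (i := ⟨i, by omega⟩) (by show i < a; omega)] at hd
    exact absurd hd (not_lt.2 (le_of_lt (Fin.castSucc_lt_last _)))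
  · rcases Nat.lt_trichotomy i a with h2 | h2 | h2
    · omega
    · -- i = a : descent iff b ≠ 0
      have hRleft : i ∉ descentSet σ := by
        rw [mem_descentSet]; rintro ⟨h, -⟩; omega
      have hRright : ¬ ∃ j ∈ descentSet τ, i = a + 1 + j := by
        rintro ⟨j, -, rfl⟩; omega
      simp only [hRleft, hRright, false_or, or_false]
      rw [mem_descentSet]
      constructor
      · rintro ⟨h, -⟩
        exact ⟨by omega, h2⟩
      · rintro ⟨hb, -⟩
        refine ⟨by omega, ?_⟩
        rw [insPerm_apply, insPerm_apply,
          insFun_gt a b S hS hS' σ τ (i := ⟨i+1, by omega⟩) (by show a < i + 1; omega)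
            (by show i + 1 - a - 1 < b; omega),
          insFun_mid a b S hS hS' σ τ (i := ⟨i, by omega⟩) (by show i = a; omega)]
        exact Fin.castSucc_lt_last _
    · -- i > a : descent of τ at j = i - a - 1
      have hRleft : i ∉ descentSet σ := by
        rw [mem_descentSet]; rintro ⟨h, -⟩; omega
      have hRmid : ¬ (b ≠ 0 ∧ i = a) := by rintro ⟨-, rfl⟩; omega
      simp only [hRleft, hRmid, false_or]
      rw [mem_descentSet]
      constructor
      · rintro ⟨h, hd⟩
        refine ⟨i - a - 1, ?_, by omega⟩
        rw [mem_descentSet]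
        refine ⟨by omega, ?_⟩
        rw [insPerm_apply, insPerm_apply,
          insFun_gt a b S hS hS' σ τ (i := ⟨i+1, h⟩) (by show a < i + 1; omega)
            (by show i + 1 - a - 1 < b; omega),
          insFun_gt a b S hS hS' σ τ (i := ⟨i, by omega⟩) (by show a < i; omega)
            (by show i - a - 1 < b; omega)] at hd
        rw [Fin.castSucc_lt_castSucc_iff, Subtype.coe_lt_coe, OrderIso.lt_iff_lt] at hd
        have e : (⟨(((⟨i+1, h⟩ : Fin (a+b+1)) : ℕ)) - a - 1, by show i + 1 - a - 1 < b; omega⟩ : Fin b)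
            = ⟨i - a - 1 + 1, by omega⟩ := Fin.ext (by show i + 1 - a - 1 = i - a - 1 + 1; omega)
        rw [e] at hd
        exact hd
      · rintro ⟨j, hj, hij⟩
        rw [mem_descentSet] at hj
        obtain ⟨hjb, hd⟩ := hj
        refine ⟨by omega, ?_⟩
        rw [insPerm_apply, insPerm_apply,
          insFun_gt a b S hS hS' σ τ (i := ⟨i+1, by omega⟩) (by show a < i + 1; omega)
            (by show i + 1 - a - 1 < b; omega),
          insFun_gt a b S hS hS' σ τ (i := ⟨i, by omega⟩) (by show a < i; omega)
            (by show i - a - 1 < b; omega)]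
        rw [Fin.castSucc_lt_castSucc_iff, Subtype.coe_lt_coe, OrderIso.lt_iff_lt]
        have e1 : (⟨(((⟨i+1, by omega⟩ : Fin (a+b+1)) : ℕ)) - a - 1, by show i + 1 - a - 1 < b; omega⟩ : Fin b)
            = ⟨j + 1, hjb⟩ := Fin.ext (by show i + 1 - a - 1 = j + 1; omega)
        have e2 : (⟨(((⟨i, by omega⟩ : Fin (a+b+1)) : ℕ)) - a - 1, by show i - a - 1 < b; omega⟩ : Fin b)
            = ⟨j, by omega⟩ := Fin.ext (by show i - a - 1 = j; omega)
        rw [e1, e2]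
        exact hd

end Insertion2

lemma descentSet_lt {n : ℕ} (π : Equiv.Perm (Fin n)) : ∀ i ∈ descentSet π, i + 1 < n := by
  intro i hi
  rw [mem_descentSet] at hi
  exact hi.1

section Insertion3

variable (a b : ℕ) (S : Finset (Fin (a+b))) (hS : S.card = a) (hS' : Sᶜ.card = b)
  (σ : Equiv.Perm (Fin a)) (τ : Equiv.Perm (Fin b))

lemma descentSet_insPerm :
    descentSet (insPerm a b S hS hS' σ τ) =
      descentSet σ ∪ ((if b = 0 then (∅ : Finset ℕ) else {a}) ∪
        (descentSet τ).image (fun j => a + 1 + j)) := by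
  ext i
  rw [mem_descentSet_insPerm]
  simp only [Finset.mem_union, Finset.mem_image]
  constructor
  · rintro (h | ⟨hb, rfl⟩ | ⟨j, hj, rfl⟩)
    · exact Or.inl h
    · refine Or.inr (Or.inl ?_)
      rw [if_neg hb]
      exact Finset.mem_singleton_self _
    · exact Or.inr (Or.inr ⟨j, hj, rfl⟩)
  · rintro (h | h | ⟨j, hj, rfl⟩)
    · exact Or.inl h
    · by_cases hb : b = 0
      · rw [if_pos hb] at h; exact absurd h (Finset.notMem_empty _)
      · rw [if_neg hb, Finset.mem_singleton] at h
        exact Or.inr (Or.inl ⟨hb, h⟩)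
    · exact Or.inr (Or.inr ⟨j, hj, rfl⟩)

lemma odes_insPerm :
    odes (insPerm a b S hS hS' σ τ) =
      odes σ + ((if b ≠ 0 ∧ Even a then 1 else 0) + (if Even a then edes τ else odes τ)) := by
  unfold odes edes
  rw [descentSet_insPerm, Finset.filter_union, Finset.filter_union]
  rw [Finset.card_union_of_disjoint, Finset.card_union_of_disjoint]
  · congr 1
    congr 1
    · -- middle card
      by_cases hb : b = 0 <;> by_cases ha : Even a <;>
        simp [hb, ha, Finset.filter_singleton]
    · -- image card
      rw [Finset.filter_image,
        Finset.card_image_of_injOn (Function.Injective.injOn (fun x y h => by omega))]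
      by_cases ha : Even a
      · rw [if_pos ha]
        congr 1
        apply Finset.filter_congr
        intro j hj
        have ha2 := Nat.even_iff.1 ha
        have h2 : Even (a + 1 + j) ↔ Odd j := by
          rw [Nat.even_iff, Nat.odd_iff]; constructor <;> intro <;> omega
        first | exact h2 | exact propext h2
      · rw [if_neg ha]
        congr 1
        apply Finset.filter_congr
        intro j hj
        have ha2 := Nat.odd_iff.1 (Nat.not_even_iff_odd.1 ha)
        have h2 : Even (a + 1 + j) ↔ Even j := by
          rw [Nat.even_iff, Nat.even_iff]; constructor <;> intro <;> omega
        first | exact h2 | exact propext h2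
  · -- inner disjointness: middle vs image
    rw [Finset.disjoint_left]
    intro x hx hy
    simp only [Finset.mem_filter, Finset.mem_image] at hx hy
    obtain ⟨j, -, hj⟩ := hy.1
    by_cases hb : b = 0
    · rw [if_pos hb] at hx; exact absurd hx.1 (Finset.notMem_empty _)
    · rw [if_neg hb, Finset.mem_singleton] at hx
      omega
  · -- outer disjointness
    rw [Finset.disjoint_left]
    intro x hx hy
    simp only [Finset.mem_filter, Finset.mem_union, Finset.mem_image] at hx hy
    have hxa := descentSet_lt σ x hx.1
    rcases hy with ⟨h, -⟩ | ⟨⟨j, -, hj⟩, -⟩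
    · by_cases hb : b = 0
      · rw [if_pos hb] at h; exact absurd h (Finset.notMem_empty _)
      · rw [if_neg hb, Finset.mem_singleton] at h; omega
    · omega

lemma edes_insPerm :
    edes (insPerm a b S hS hS' σ τ) =
      edes σ + ((if b ≠ 0 ∧ Odd a then 1 else 0) + (if Even a then odes τ else edes τ)) := by
  unfold odes edes
  rw [descentSet_insPerm, Finset.filter_union, Finset.filter_union]
  rw [Finset.card_union_of_disjoint, Finset.card_union_of_disjoint]
  · congr 1
    congr 1
    · by_cases hb : b = 0 <;> by_cases ha : Odd a <;>
        simp [hb, ha, Finset.filter_singleton]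
    · rw [Finset.filter_image,
        Finset.card_image_of_injOn (Function.Injective.injOn (fun x y h => by omega))]
      by_cases ha : Even a
      · rw [if_pos ha]
        congr 1
        apply Finset.filter_congr
        intro j hj
        have ha2 := Nat.even_iff.1 ha
        have h2 : Odd (a + 1 + j) ↔ Even j := by
          rw [Nat.odd_iff, Nat.even_iff]; constructor <;> intro <;> omega
        first | exact h2 | exact propext h2
      · rw [if_neg ha]
        congr 1
        apply Finset.filter_congr
        intro j hj
        have ha2 := Nat.odd_iff.1 (Nat.not_even_iff_odd.1 ha)
        have h2 : Odd (a + 1 + j) ↔ Odd j := by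
          rw [Nat.odd_iff, Nat.odd_iff]; constructor <;> intro <;> omega
        first | exact h2 | exact propext h2
  · rw [Finset.disjoint_left]
    intro x hx hy
    simp only [Finset.mem_filter, Finset.mem_image] at hx hy
    obtain ⟨j, -, hj⟩ := hy.1
    by_cases hb : b = 0
    · rw [if_pos hb] at hx; exact absurd hx.1 (Finset.notMem_empty _)
    · rw [if_neg hb, Finset.mem_singleton] at hx
      omega
  · rw [Finset.disjoint_left]
    intro x hx hy
    simp only [Finset.mem_filter, Finset.mem_union, Finset.mem_image] at hx hy
    have hxa := descentSet_lt σ x hx.1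
    rcases hy with ⟨h, -⟩ | ⟨⟨j, -, hj⟩, -⟩
    · by_cases hb : b = 0
      · rw [if_pos hb] at h; exact absurd h (Finset.notMem_empty _)
      · rw [if_neg hb, Finset.mem_singleton] at h; omega
    · omega

lemma weight_insPerm (p q : ℝ) :
    p ^ odes (insPerm a b S hS hS' σ τ) * q ^ edes (insPerm a b S hS hS' σ τ) =
      (if b = 0 then 1 else if Even a then p else q) * (p ^ odes σ * q ^ edes σ) *
        (if Even a then p ^ edes τ * q ^ odes τ else p ^ odes τ * q ^ edes τ) := by
  rw [odes_insPerm, edes_insPerm]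
  by_cases hb : b = 0 <;> by_cases ha : Even a <;>
    simp [hb, ha, ← Nat.not_even_iff_odd, pow_add] <;> ring

end Insertion3

lemma compl_card {a b : ℕ} {S : Finset (Fin (a+b))} (hS : S.card = a) : Sᶜ.card = b := by
  rw [Finset.card_compl, Fintype.card_fin, hS]; omega

section Insertion4

variable (a b : ℕ) (S : Finset (Fin (a+b))) (hS : S.card = a) (hS' : Sᶜ.card = b)
  (σ : Equiv.Perm (Fin a)) (τ : Equiv.Perm (Fin b))

lemma insPerm_left (u : Fin a) :
    insPerm a b S hS hS' σ τ ⟨u.val, by omega⟩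
      = Fin.castSucc ((S.orderIsoOfFin hS) (σ u) : Fin (a+b)) := by
  rw [insPerm_apply, insFun_lt a b S hS hS' σ τ (show ((⟨u.val, by omega⟩ : Fin (a+b+1)) : ℕ) < a from u.isLt)]

lemma insPerm_mid :
    insPerm a b S hS hS' σ τ ⟨a, by omega⟩ = Fin.last (a+b) := by
  rw [insPerm_apply, insFun_mid a b S hS hS' σ τ (show ((⟨a, by omega⟩ : Fin (a+b+1)) : ℕ) = a from rfl)]

lemma insPerm_right (u : Fin b) :
    insPerm a b S hS hS' σ τ ⟨a + 1 + u.val, by omega⟩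
      = Fin.castSucc ((Sᶜ.orderIsoOfFin hS') (τ u) : Fin (a+b)) := by
  rw [insPerm_apply, insFun_gt a b S hS hS' σ τ
    (show a < ((⟨a + 1 + u.val, by omega⟩ : Fin (a+b+1)) : ℕ) by show a < a + 1 + u.val; omega)
    (by show a + 1 + u.val - a - 1 < b; omega)]
  congr 2
  apply congrArg
  apply congrArg
  apply Fin.ext
  show a + 1 + u.val - a - 1 = u.val
  omega

lemma mem_S_iff (s : Fin (a+b)) :
    s ∈ S ↔ ∃ (i : ℕ) (h : i < a),
      insPerm a b S hS hS' σ τ ⟨i, by omega⟩ = Fin.castSucc s := by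
  constructor
  · intro hs
    set u : Fin a := σ.symm ((S.orderIsoOfFin hS).symm ⟨s, hs⟩) with hu
    refine ⟨u.val, u.isLt, ?_⟩
    rw [show (⟨u.val, by omega⟩ : Fin (a+b+1)) = ⟨u.val, by omega⟩ from rfl]
    rw [insPerm_left a b S hS hS' σ τ u]
    rw [hu, Equiv.apply_symm_apply, OrderIso.apply_symm_apply]
  · rintro ⟨i, h, hi⟩
    rw [show (⟨i, by omega⟩ : Fin (a+b+1)) = ⟨(⟨i, h⟩ : Fin a).val, by omega⟩ from rfl,
      insPerm_left a b S hS hS' σ τ ⟨i, h⟩] at hi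
    have := Fin.castSucc_injective _ hi
    rw [← this]
    exact ((S.orderIsoOfFin hS) (σ ⟨i, h⟩)).2

end Insertion4

lemma fiber_sum (a b : ℕ) (p q : ℝ) :
    ∑ π ∈ Finset.univ.filter
        (fun π : Equiv.Perm (Fin (a+b+1)) => π ⟨a, by omega⟩ = Fin.last (a+b)),
      p ^ odes π * q ^ edes π
    = ((a+b).choose a : ℝ) * (if b = 0 then 1 else if Even a then p else q)
        * refinedEulerian a p q
        * (if Even a then refinedEulerian b q p else refinedEulerian b p q) := by
  classical
  have step1 :
      ∑ x : {S : Finset (Fin (a+b)) // S.card = a} × Equiv.Perm (Fin a) × Equiv.Perm (Fin b),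
        p ^ odes (insPerm a b x.1.1 x.1.2 (compl_card x.1.2) x.2.1 x.2.2)
          * q ^ edes (insPerm a b x.1.1 x.1.2 (compl_card x.1.2) x.2.1 x.2.2)
      = ∑ π ∈ Finset.univ.filter
          (fun π : Equiv.Perm (Fin (a+b+1)) => π ⟨a, by omega⟩ = Fin.last (a+b)),
        p ^ odes π * q ^ edes π := by
    apply Finset.sum_bij (fun x _ => insPerm a b x.1.1 x.1.2 (compl_card x.1.2) x.2.1 x.2.2)
    · intro x _
      rw [Finset.mem_filter]
      exact ⟨Finset.mem_univ _, insPerm_mid _ _ _ _ _ _ _⟩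
    · intro x _ y _ hxy
      have hSeq : x.1.1 = y.1.1 := by
        ext s
        rw [mem_S_iff a b x.1.1 x.1.2 (compl_card x.1.2) x.2.1 x.2.2 s,
            mem_S_iff a b y.1.1 y.1.2 (compl_card y.1.2) y.2.1 y.2.2 s]
        constructor
        · rintro ⟨i, h, hi⟩; exact ⟨i, h, by rw [← hxy]; exact hi⟩
        · rintro ⟨i, h, hi⟩; exact ⟨i, h, by rw [hxy]; exact hi⟩
      obtain ⟨⟨S1, hS1⟩, σ1, τ1⟩ := x
      obtain ⟨⟨S2, hS2⟩, σ2, τ2⟩ := y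
      simp only at hSeq hxy ⊢
      subst hSeq
      have hσ : σ1 = σ2 := by
        apply Equiv.ext; intro u
        have h1 := insPerm_left a b S1 hS1 (compl_card hS1) σ1 τ1 u
        have h2 := insPerm_left a b S1 hS2 (compl_card hS2) σ2 τ2 u
        have h3 := DFunLike.congr_fun hxy (⟨u.val, by omega⟩ : Fin (a+b+1))
        rw [h1, h2] at h3
        have h4 := Fin.castSucc_injective _ h3
        have h5 := (S1.orderIsoOfFin hS1).injective (Subtype.coe_injective h4)
        exact h5
      have hτ : τ1 = τ2 := by
        apply Equiv.ext; intro u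
        have h1 := insPerm_right a b S1 hS1 (compl_card hS1) σ1 τ1 u
        have h2 := insPerm_right a b S1 hS2 (compl_card hS2) σ2 τ2 u
        have h3 := DFunLike.congr_fun hxy (⟨a + 1 + u.val, by omega⟩ : Fin (a+b+1))
        rw [h1, h2] at h3
        have h4 := Fin.castSucc_injective _ h3
        have h5 := (S1ᶜ.orderIsoOfFin (compl_card hS1)).injective (Subtype.coe_injective h4)
        exact h5
      exact Prod.ext (Subtype.ext rfl) (Prod.ext hσ hτ)
    · -- surjectivity
      intro π hπ
      rw [Finset.mem_filter] at hπ
      have hπa : π ⟨a, by omega⟩ = Fin.last (a+b) := hπ.2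
      have hne : ∀ (i : Fin (a+b+1)), (i : ℕ) ≠ a → π i ≠ Fin.last (a+b) := by
        intro i hi hcon
        have := π.injective (hcon.trans hπa.symm)
        exact hi (congrArg Fin.val this)
      set g : Fin a → Fin (a+b) := fun u =>
        (π ⟨u.val, by omega⟩).castPred (hne _ (by exact Nat.ne_of_lt u.isLt)) with hg
      have ginj : Function.Injective g := by
        intro u v huv
        have h1 : π ⟨u.val, by omega⟩ = π ⟨v.val, by omega⟩ := by
          have h0 := congrArg Fin.castSucc huv
          rwa [hg, Fin.castSucc_castPred, Fin.castSucc_castPred] at h0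
        have h2 := π.injective h1
        exact Fin.ext (by simpa using congrArg Fin.val h2)
      set S : Finset (Fin (a+b)) := Finset.image g Finset.univ with hSdef
      have hS : S.card = a := by
        rw [hSdef, Finset.card_image_of_injective _ ginj, Finset.card_univ, Fintype.card_fin]
      set h : Fin b → Fin (a+b) := fun u =>
        (π ⟨a + 1 + u.val, by omega⟩).castPred (hne _ (by show a + 1 + u.val ≠ a; omega)) with hh
      have hinj : Function.Injective h := by
        intro u v huv
        have h1 : π ⟨a + 1 + u.val, by omega⟩ = π ⟨a + 1 + v.val, by omega⟩ := by
          have h0 := congrArg Fin.castSucc huv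
          rwa [hh, Fin.castSucc_castPred, Fin.castSucc_castPred] at h0
        have h2 : a + 1 + (u : ℕ) = a + 1 + (v : ℕ) := by
          simpa using congrArg Fin.val (π.injective h1)
        exact Fin.ext (by omega)
      have hmem : ∀ u, h u ∈ Sᶜ := by
        intro u
        rw [Finset.mem_compl, hSdef, Finset.mem_image]
        rintro ⟨v, -, hv⟩
        have h1 : π ⟨v.val, by omega⟩ = π ⟨a + 1 + u.val, by omega⟩ := by
          have h0 := congrArg Fin.castSucc hv
          rwa [hg, hh, Fin.castSucc_castPred, Fin.castSucc_castPred] at h0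
        have h2 : (v : ℕ) = a + 1 + u.val := by
          simpa using congrArg Fin.val (π.injective h1)
        have hv2 := v.isLt
        omega
      have hgmem : ∀ u, g u ∈ S := by
        intro u
        rw [hSdef, Finset.mem_image]
        exact ⟨u, Finset.mem_univ _, rfl⟩
      set σ0 : Fin a → Fin a := fun u => (S.orderIsoOfFin hS).symm ⟨g u, hgmem u⟩ with hσ0
      have hσ0inj : Function.Injective σ0 := by
        intro u v huv
        have := (S.orderIsoOfFin hS).symm.injective huv
        exact ginj (congrArg Subtype.val this)
      set τ0 : Fin b → Fin b := fun u => (Sᶜ.orderIsoOfFin (compl_card hS)).symm ⟨h u, hmem u⟩ with hτ0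
      have hτ0inj : Function.Injective τ0 := by
        intro u v huv
        have := (Sᶜ.orderIsoOfFin (compl_card hS)).symm.injective huv
        exact hinj (congrArg Subtype.val this)
      refine ⟨(⟨S, hS⟩, Equiv.ofBijective σ0 ((Finite.injective_iff_bijective).1 hσ0inj),
        Equiv.ofBijective τ0 ((Finite.injective_iff_bijective).1 hτ0inj)), Finset.mem_univ _, ?_⟩
      apply Equiv.ext
      intro i
      rcases Nat.lt_trichotomy (i : ℕ) a with hi | hi | hi
      · have hieq : i = ⟨(⟨(i : ℕ), hi⟩ : Fin a).val, by omega⟩ := Fin.ext rfl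
        rw [hieq, insPerm_left]
        show Fin.castSucc ((S.orderIsoOfFin hS) (σ0 ⟨(i : ℕ), hi⟩) : Fin (a+b)) = _
        rw [hσ0]
        simp only [OrderIso.apply_symm_apply]
        show Fin.castSucc (g ⟨(i : ℕ), hi⟩) = _
        rw [hg]
        simp only [Fin.castSucc_castPred]
      · have hieq : i = ⟨a, by omega⟩ := Fin.ext hi
        rw [hieq, insPerm_mid, hπa]
      · have hu : (i : ℕ) - a - 1 < b := by have := i.isLt; omega
        have hieq : i = ⟨a + 1 + (⟨(i : ℕ) - a - 1, hu⟩ : Fin b).val, by omega⟩ :=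
          Fin.ext (by show (i : ℕ) = a + 1 + ((i : ℕ) - a - 1); omega)
        rw [hieq, insPerm_right]
        show Fin.castSucc ((Sᶜ.orderIsoOfFin (compl_card hS)) (τ0 ⟨(i : ℕ) - a - 1, hu⟩) : Fin (a+b)) = _
        rw [hτ0]
        simp only [OrderIso.apply_symm_apply]
        show Fin.castSucc (h ⟨(i : ℕ) - a - 1, hu⟩) = _
        rw [hh]
        simp only [Fin.castSucc_castPred]
    · intro x _
      rfl
  rw [← step1]
  have step2 :
      ∑ x : {S : Finset (Fin (a+b)) // S.card = a} × Equiv.Perm (Fin a) × Equiv.Perm (Fin b),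
        p ^ odes (insPerm a b x.1.1 x.1.2 (compl_card x.1.2) x.2.1 x.2.2)
          * q ^ edes (insPerm a b x.1.1 x.1.2 (compl_card x.1.2) x.2.1 x.2.2)
      = ∑ x : {S : Finset (Fin (a+b)) // S.card = a} × Equiv.Perm (Fin a) × Equiv.Perm (Fin b),
        (if b = 0 then 1 else if Even a then p else q)
          * (p ^ odes x.2.1 * q ^ edes x.2.1)
          * (if Even a then p ^ edes x.2.2 * q ^ odes x.2.2
              else p ^ odes x.2.2 * q ^ edes x.2.2) :=
    Finset.sum_congr rfl (fun x _ => weight_insPerm _ _ _ _ _ _ _ _ _)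
  rw [step2]
  simp only [Fintype.sum_prod_type]
  rw [Finset.sum_const, Finset.card_univ, Fintype.card_finset_len, Fintype.card_fin,
    nsmul_eq_mul]
  have step3 :
      ∑ σ : Equiv.Perm (Fin a), ∑ τ : Equiv.Perm (Fin b),
        (if b = 0 then 1 else if Even a then p else q)
          * (p ^ odes σ * q ^ edes σ)
          * (if Even a then p ^ edes τ * q ^ odes τ else p ^ odes τ * q ^ edes τ)
      = (if b = 0 then 1 else if Even a then p else q)
          * refinedEulerian a p q
          * (if Even a then refinedEulerian b q p else refinedEulerian b p q) := by
    rw [← Finset.sum_mul_sum]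
    have e1 : ∑ σ : Equiv.Perm (Fin a),
        (if b = 0 then 1 else if Even a then p else q) * (p ^ odes σ * q ^ edes σ)
        = (if b = 0 then 1 else if Even a then p else q) * refinedEulerian a p q := by
      rw [← Finset.mul_sum]; rfl
    have e2 : ∑ τ : Equiv.Perm (Fin b),
        (if Even a then p ^ edes τ * q ^ odes τ else p ^ odes τ * q ^ edes τ)
        = (if Even a then refinedEulerian b q p else refinedEulerian b p q) := by
      by_cases ha : Even a
      · simp only [if_pos ha]
        exact Finset.sum_congr rfl (fun τ _ => mul_comm _ _)
      · simp only [if_neg ha]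
        rfl
    rw [e1, e2]
  rw [step3]
  ring

lemma decomp (N : ℕ) (p q : ℝ) :
    refinedEulerian (N+1) p q
      = ∑ k ∈ Finset.range (N+1),
          ((N.choose k : ℝ) * (if N - k = 0 then 1 else if Even k then p else q)
            * refinedEulerian k p q
            * (if Even k then refinedEulerian (N-k) q p else refinedEulerian (N-k) p q)) := by
  classical
  have h0 : refinedEulerian (N+1) p q
      = ∑ π : Equiv.Perm (Fin (N+1)), p ^ odes π * q ^ edes π := rfl
  rw [h0, ← Finset.sum_fiberwise_of_maps_to
    (g := fun π : Equiv.Perm (Fin (N+1)) => π.symm (Fin.last N))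
    (fun x _ => Finset.mem_univ _) (fun π => p ^ odes π * q ^ edes π)]
  have step : ∀ j : Fin (N+1),
      ∑ π ∈ Finset.univ.filter
          (fun π : Equiv.Perm (Fin (N+1)) => π.symm (Fin.last N) = j),
        p ^ odes π * q ^ edes π
      = ((N.choose (j : ℕ) : ℝ)
          * (if N - (j : ℕ) = 0 then 1 else if Even (j : ℕ) then p else q)
          * refinedEulerian (j : ℕ) p q
          * (if Even (j : ℕ) then refinedEulerian (N - (j : ℕ)) q p
              else refinedEulerian (N - (j : ℕ)) p q)) := by
    rintro ⟨k, hk⟩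
    have hfib : (Finset.univ.filter
        (fun π : Equiv.Perm (Fin (N+1)) => π.symm (Fin.last N) = ⟨k, hk⟩))
        = Finset.univ.filter
          (fun π : Equiv.Perm (Fin (N+1)) => π ⟨k, hk⟩ = Fin.last N) := by
      ext π
      simp only [Finset.mem_filter, Finset.mem_univ, true_and]
      rw [Equiv.symm_apply_eq, eq_comm]
    rw [hfib]
    obtain ⟨b, rfl⟩ : ∃ b, N = k + b := ⟨N - k, by omega⟩
    simp only []
    rw [show k + b - k = b by omega]
    exact fiber_sum k b p q
  rw [Finset.sum_congr rfl (fun j _ => step j)]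
  exact Fin.sum_univ_eq_sum_range
    (fun k => ((N.choose k : ℝ) * (if N - k = 0 then 1 else if Even k then p else q)
      * refinedEulerian k p q
      * (if Even k then refinedEulerian (N-k) q p else refinedEulerian (N-k) p q))) (N+1)

lemma sum_range_even_odd (g : ℕ → ℝ) (m : ℕ) :
    ∑ k ∈ Finset.range (2*m+1), g k
      = (∑ i ∈ Finset.range (m+1), g (2*i)) + ∑ i ∈ Finset.range m, g (2*i+1) := by
  induction m with
  | zero => simp
  | succ m ih =>
    rw [show 2*(m+1)+1 = (2*m+1)+1+1 by ring, Finset.sum_range_succ, Finset.sum_range_succ, ih,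
      Finset.sum_range_succ (fun i => g (2*i)) (m+1), Finset.sum_range_succ (fun i => g (2*i+1)) m]
    simp only [show (2*m+1)+1 = 2*(m+1) by ring]
    ring

/-- A_{2n}(p,q) = (1+p)A_{2n-1}(p,q) + (p+q)Σ_{i=1}^{n-1} C(2n-1,2i-1) A_{2i-1}(p,q) A_{2n-2i}(p,q). -/
theorem refinedEulerian_even_rec (n : ℕ) (hn : 1 ≤ n) (p q : ℝ) :
    refinedEulerian (2 * n) p q =
      (1 + p) * refinedEulerian (2 * n - 1) p q +
        (p + q) * ∑ i ∈ Finset.Icc 1 (n - 1),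
          ((2 * n - 1).choose (2 * i - 1) : ℝ) *
            refinedEulerian (2 * i - 1) p q * refinedEulerian (2 * n - 2 * i) p q := by

  obtain ⟨m, rfl⟩ : ∃ m, n = m + 1 := ⟨n - 1, by omega⟩
  rw [show 2*(m+1) = 2*m+1+1 by ring]
  rw [show 2*m+1+1-1 = 2*m+1 from rfl]
  rw [show m+1-1 = m from rfl]
  rw [decomp (2*m+1) p q]
  rw [Finset.sum_range_succ]
  rw [sum_range_even_odd]
  rw [Finset.sum_range_succ']
  rw [← Finset.sum_range_reflect]
  have hEtail : ∑ j ∈ Finset.range m,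
      ((((2 * m + 1).choose (2 * (m - 1 - j + 1)) : ℝ) *
            if 2 * m + 1 - 2 * (m - 1 - j + 1) = 0 then 1
            else if Even (2 * (m - 1 - j + 1)) then p else q) *
          refinedEulerian (2 * (m - 1 - j + 1)) p q *
        if Even (2 * (m - 1 - j + 1)) then refinedEulerian (2 * m + 1 - 2 * (m - 1 - j + 1)) q p
        else refinedEulerian (2 * m + 1 - 2 * (m - 1 - j + 1)) p q)
      = ∑ j ∈ Finset.range m, p * (((2 * m + 1).choose (2 * j + 1) : ℝ)
          * refinedEulerian (2 * j + 1) p q * refinedEulerian (2 * (m - j)) p q) := by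
    apply Finset.sum_congr rfl
    intro j hj
    rw [Finset.mem_range] at hj
    rw [show 2 * (m - 1 - j + 1) = 2 * (m - j) by omega]
    rw [show 2 * m + 1 - 2 * (m - j) = 2 * j + 1 by omega]
    rw [if_neg (by omega : ¬ (2 * j + 1 = 0))]
    rw [if_pos (even_two_mul _), if_pos (even_two_mul _)]
    rw [refinedEulerian_symm j q p]
    rw [show ((2 * m + 1).choose (2 * (m - j)) : ℕ) = (2 * m + 1).choose (2 * j + 1) from by
      rw [show 2 * (m - j) = 2 * m + 1 - (2 * j + 1) by omega]
      exact Nat.choose_symm (by omega)]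
    ring
  have hE0 : ((((2 * m + 1).choose (2 * 0) : ℝ)) *
        if 2 * m + 1 - 2 * 0 = 0 then 1 else if Even (2 * 0) then p else q) *
        refinedEulerian (2 * 0) p q *
        (if Even (2 * 0) then refinedEulerian (2 * m + 1 - 2 * 0) q p
          else refinedEulerian (2 * m + 1 - 2 * 0) p q)
      = p * refinedEulerian (2 * m + 1) p q := by
    simp only [Nat.mul_zero, Nat.sub_zero, Nat.choose_zero_right, refinedEulerian_zero,
      Even.zero, if_true, Nat.cast_one]
    rw [if_neg (by omega : ¬ (2 * m + 1 = 0))]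
    rw [refinedEulerian_symm m q p]
    ring
  have hOdd : ∑ i ∈ Finset.range m,
      ((((2 * m + 1).choose (2 * i + 1) : ℝ)) *
          if 2 * m + 1 - (2 * i + 1) = 0 then 1 else if Even (2 * i + 1) then p else q) *
        refinedEulerian (2 * i + 1) p q *
        (if Even (2 * i + 1) then refinedEulerian (2 * m + 1 - (2 * i + 1)) q p
          else refinedEulerian (2 * m + 1 - (2 * i + 1)) p q)
      = ∑ i ∈ Finset.range m, q * (((2 * m + 1).choose (2 * i + 1) : ℝ)
          * refinedEulerian (2 * i + 1) p q * refinedEulerian (2 * (m - i)) p q) := by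
    apply Finset.sum_congr rfl
    intro i hi
    rw [Finset.mem_range] at hi
    rw [show 2 * m + 1 - (2 * i + 1) = 2 * (m - i) by omega]
    have hne : ¬ Even (2 * i + 1) := by rw [Nat.even_iff]; omega
    rw [if_neg (by omega : ¬ (2 * (m - i) = 0))]
    rw [if_neg hne, if_neg hne]
    ring
  have hLast : ((((2 * m + 1).choose (2 * m + 1) : ℝ)) *
        if 2 * m + 1 - (2 * m + 1) = 0 then 1 else if Even (2 * m + 1) then p else q) *
        refinedEulerian (2 * m + 1) p q *
        (if Even (2 * m + 1) then refinedEulerian (2 * m + 1 - (2 * m + 1)) q p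
          else refinedEulerian (2 * m + 1 - (2 * m + 1)) p q)
      = refinedEulerian (2 * m + 1) p q := by
    have hne : ¬ Even (2 * m + 1) := by rw [Nat.even_iff]; omega
    rw [show 2 * m + 1 - (2 * m + 1) = 0 by omega, if_pos rfl, Nat.choose_self, if_neg hne,
      refinedEulerian_zero]
    norm_num
  have hRHS : ∑ i ∈ Finset.Icc 1 m,
      (((2 * m + 1).choose (2 * i - 1) : ℝ) * refinedEulerian (2 * i - 1) p q *
        refinedEulerian (2 * m + 1 + 1 - 2 * i) p q)
      = ∑ i ∈ Finset.range m, (((2 * m + 1).choose (2 * i + 1) : ℝ)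
          * refinedEulerian (2 * i + 1) p q * refinedEulerian (2 * (m - i)) p q) := by
    rw [← Finset.Ico_add_one_right_eq_Icc, Finset.sum_Ico_eq_sum_range]
    rw [show m + 1 - 1 = m from rfl]
    apply Finset.sum_congr rfl
    intro i hi
    rw [Finset.mem_range] at hi
    rw [show 2 * (1 + i) - 1 = 2 * i + 1 by omega,
      show 2 * m + 1 + 1 - 2 * (1 + i) = 2 * (m - i) by omega]
  rw [hEtail, hE0, hOdd, hLast, hRHS]
  rw [← Finset.mul_sum, ← Finset.mul_sum]
  ring
end

section
/- For all n ≥ 1, (1+q)·A_{2n}(p,q) = (1+p)·A_{2n}(q,p) as polynomials in p and q, where A_m(p,q) = Σ_{π∈S_m} p^{odes(π)} q^{edes(π)}. -/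
open Finset

/-! ### Auxiliary development for the proof -/

namespace RefinedAux

open Equiv

/-- The weight of a (0-based) descent position. -/
noncomputable def wt (p q : ℝ) (i : ℕ) : ℝ := if Even i then p else q

/-- Total weight of a permutation. -/
noncomputable def Wt (p q : ℝ) {l : ℕ} (π : Equiv.Perm (Fin l)) : ℝ :=
  ∏ i ∈ descentSet π, wt p q i

/-- Refined sum over permutations with prescribed first value. -/
noncomputable def SS (m : ℕ) (p q : ℝ) (r : Fin (m + 1)) : ℝ :=
  ∑ σ : Equiv.Perm (Fin (m + 1)), if σ 0 = r then Wt p q σ else 0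

lemma wt_succ (p q : ℝ) (i : ℕ) : wt p q (i + 1) = wt q p i := by
  unfold wt
  by_cases h : Even i
  · rw [if_pos h, if_neg (by simpa [Nat.even_add_one] using h)]
  · rw [if_neg h, if_pos (by simpa [Nat.even_add_one] using h)]

lemma Wt_eq (p q : ℝ) {l : ℕ} (π : Equiv.Perm (Fin l)) :
    Wt p q π = p ^ odes π * q ^ edes π := by
  unfold Wt wt odes edes
  rw [Finset.prod_ite]
  rw [Finset.prod_const, Finset.prod_const]
  have hfilter : Finset.filter (fun x => ¬ Even x) (descentSet π)
      = Finset.filter (fun i => Odd i) (descentSet π) := by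
    apply Finset.filter_congr
    intro i _
    exact Nat.not_even_iff_odd
  rw [hfilter]

/-- The underlying function of the extension of a permutation by a new first value. -/
def insFun (m : ℕ) (v : Fin (m + 2)) (e : Equiv.Perm (Fin (m + 1))) :
    Fin (m + 2) → Fin (m + 2) :=
  Fin.cases v (fun i => v.succAbove (e i))

lemma insFun_injective (m : ℕ) (v : Fin (m + 2)) (e : Equiv.Perm (Fin (m + 1))) :
    Function.Injective (insFun m v e) := by
  intro x y hxy
  cases x using Fin.cases with
  | zero =>
    cases y using Fin.cases with
    | zero => rfl
    | succ j =>
      simp only [insFun, Fin.cases_zero, Fin.cases_succ] at hxy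
      exact absurd hxy.symm (Fin.succAbove_ne v (e j))
  | succ i =>
    cases y using Fin.cases with
    | zero =>
      simp only [insFun, Fin.cases_zero, Fin.cases_succ] at hxy
      exact absurd hxy (Fin.succAbove_ne v (e i))
    | succ j =>
      simp only [insFun, Fin.cases_succ] at hxy
      exact congrArg Fin.succ (e.injective (Fin.succAbove_right_injective hxy))

/-- Extend a permutation of `Fin (m+1)` to a permutation of `Fin (m+2)` with
prescribed first value `v`. -/
noncomputable def insPerm (m : ℕ) (v : Fin (m + 2)) (e : Equiv.Perm (Fin (m + 1))) :
    Equiv.Perm (Fin (m + 2)) :=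
  Equiv.ofBijective _ (Finite.injective_iff_bijective.mp (insFun_injective m v e))

@[simp] lemma insPerm_zero (m : ℕ) (v : Fin (m + 2)) (e : Equiv.Perm (Fin (m + 1))) :
    insPerm m v e 0 = v := by
  simp [insPerm, Equiv.ofBijective_apply, insFun]

@[simp] lemma insPerm_succ (m : ℕ) (v : Fin (m + 2)) (e : Equiv.Perm (Fin (m + 1)))
    (i : Fin (m + 1)) : insPerm m v e i.succ = v.succAbove (e i) := by
  simp [insPerm, Equiv.ofBijective_apply, insFun]

lemma descentSet_insPerm (m : ℕ) (v : Fin (m + 2)) (e : Equiv.Perm (Fin (m + 1))) :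
    descentSet (insPerm m v e) =
      (if (e 0 : ℕ) < (v : ℕ) then ({0} : Finset ℕ) else ∅) ∪
        (descentSet e).image Nat.succ := by
  ext i
  simp only [descentSet, Finset.mem_filter, Finset.mem_range, Finset.mem_union,
    Finset.mem_image]
  cases i with
  | zero =>
    have h1 : (1 : ℕ) < m + 2 := by omega
    have key : (insPerm m v e ⟨0 + 1, h1⟩ < insPerm m v e ⟨0, Nat.lt_of_succ_lt h1⟩)
        ↔ (e 0 : ℕ) < (v : ℕ) := by
      have e1 : (⟨0 + 1, h1⟩ : Fin (m + 2)) = Fin.succ (0 : Fin (m + 1)) := rfl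
      have e0 : (⟨0, Nat.lt_of_succ_lt h1⟩ : Fin (m + 2)) = (0 : Fin (m + 2)) := rfl
      rw [e1, e0, insPerm_succ]
      have : insPerm m v e 0 = v := insPerm_zero m v e
      rw [this, Fin.succAbove_lt_iff_castSucc_lt]
      rw [Fin.lt_def]
      simp
    constructor
    · rintro ⟨-, h, hlt⟩
      left
      have : (e 0 : ℕ) < (v : ℕ) := key.mp hlt
      simp [this]
    · rintro (h0 | ⟨a, _, ha⟩)
      · by_cases hc : (e 0 : ℕ) < (v : ℕ)
        · exact ⟨by omega, h1, key.mpr hc⟩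
        · rw [if_neg hc] at h0; simp at h0
      · exact absurd ha (Nat.succ_ne_zero a)
  | succ k =>
    constructor
    · rintro ⟨hk, h, hlt⟩
      right
      have hk1 : k + 1 < m + 1 := by omega
      have hk0 : k < m + 1 := by omega
      have e2 : (⟨k + 1 + 1, h⟩ : Fin (m + 2)) = Fin.succ ⟨k + 1, hk1⟩ := rfl
      have e3 : (⟨k + 1, Nat.lt_of_succ_lt h⟩ : Fin (m + 2)) = Fin.succ ⟨k, hk0⟩ := rfl
      rw [e2, e3, insPerm_succ, insPerm_succ, Fin.succAbove_lt_succAbove_iff] at hlt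
      refine ⟨k, ⟨by omega, hk1, ?_⟩, rfl⟩
      exact hlt
    · rintro (h0 | ⟨a, ⟨ha, h', hlt⟩, ha'⟩)
      · by_cases hc : (e 0 : ℕ) < (v : ℕ)
        · rw [if_pos hc] at h0; simp at h0
        · rw [if_neg hc] at h0; simp at h0
      · -- a.succ = k+1, so a = k
        have hak : a = k := by omega
        subst hak
        have h2 : a + 1 + 1 < m + 2 := by omega
        refine ⟨by omega, h2, ?_⟩
        have e2 : (⟨a + 1 + 1, h2⟩ : Fin (m + 2)) = Fin.succ ⟨a + 1, h'⟩ := rfl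
        have e3 : (⟨a + 1, Nat.lt_of_succ_lt h2⟩ : Fin (m + 2)) =
            Fin.succ ⟨a, Nat.lt_of_succ_lt h'⟩ := rfl
        rw [e2, e3, insPerm_succ, insPerm_succ, Fin.succAbove_lt_succAbove_iff]
        exact hlt

lemma Wt_insPerm (p q : ℝ) (m : ℕ) (v : Fin (m + 2)) (e : Equiv.Perm (Fin (m + 1))) :
    Wt p q (insPerm m v e) = (if (e 0 : ℕ) < (v : ℕ) then p else 1) * Wt q p e := by
  unfold Wt
  rw [descentSet_insPerm]
  rw [Finset.prod_union]
  · congr 1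
    · by_cases hc : (e 0 : ℕ) < (v : ℕ)
      · rw [if_pos hc, if_pos hc]
        simp [wt]
      · rw [if_neg hc, if_neg hc]
        simp
    · rw [Finset.prod_image (fun a _ b _ hab => Nat.succ_injective hab)]
      exact Finset.prod_congr rfl (fun i _ => wt_succ p q i)
  · by_cases hc : (e 0 : ℕ) < (v : ℕ)
    · rw [if_pos hc]
      simp only [Finset.disjoint_left, Finset.mem_singleton, Finset.mem_image]
      rintro a rfl ⟨b, _, hb⟩
      exact Nat.succ_ne_zero b hb
    · rw [if_neg hc]
      exact Finset.disjoint_empty_left _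

lemma insPerm_bijective (m : ℕ) :
    Function.Bijective (fun ve : Fin (m + 2) × Equiv.Perm (Fin (m + 1)) =>
      insPerm m ve.1 ve.2) := by
  rw [Fintype.bijective_iff_injective_and_card]
  constructor
  · rintro ⟨v, e⟩ ⟨v', e'⟩ h
    have h0 : v = v' := by
      have := Equiv.ext_iff.mp h 0
      simpa using this
    subst h0
    have he : e = e' := by
      apply Equiv.ext
      intro i
      have := Equiv.ext_iff.mp h i.succ
      simp only [insPerm_succ] at this
      exact Fin.succAbove_right_injective this
    rw [he]
  · simp [Fintype.card_perm, Nat.factorial_succ]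

lemma SS_rec (m : ℕ) (p q : ℝ) (r : Fin (m + 2)) :
    SS (m + 1) p q r =
      ∑ y : Fin (m + 1), (if (y : ℕ) < (r : ℕ) then p else 1) * SS m q p y := by
  unfold SS
  rw [← Fintype.sum_bijective _ (insPerm_bijective m)
      (fun ve => if insPerm m ve.1 ve.2 0 = r then Wt p q (insPerm m ve.1 ve.2) else 0)
      (fun σ => if σ 0 = r then Wt p q σ else 0) (fun x => rfl)]
  rw [Fintype.sum_prod_type]
  simp only [insPerm_zero, Wt_insPerm]
  have step1 : ∀ v : Fin (m + 2),
      (∑ e : Equiv.Perm (Fin (m + 1)),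
        if v = r then (if (e 0 : ℕ) < (v : ℕ) then p else 1) * Wt q p e else 0)
      = if v = r then
          (∑ e : Equiv.Perm (Fin (m + 1)),
            (if (e 0 : ℕ) < (v : ℕ) then p else 1) * Wt q p e) else 0 := by
    intro v
    split_ifs with hv
    · rfl
    · simp
  rw [Finset.sum_congr rfl (fun v _ => step1 v), Finset.sum_ite_eq' Finset.univ r]
  rw [if_pos (Finset.mem_univ r)]
  have step2 : ∀ e : Equiv.Perm (Fin (m + 1)),
      (if (e 0 : ℕ) < (r : ℕ) then p else 1) * Wt q p e
      = ∑ y : Fin (m + 1),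
          if e 0 = y then (if (y : ℕ) < (r : ℕ) then p else 1) * Wt q p e else 0 := by
    intro e
    rw [Finset.sum_ite_eq Finset.univ (e 0)
      (fun y => (if (y : ℕ) < (r : ℕ) then p else 1) * Wt q p e)]
    rw [if_pos (Finset.mem_univ _)]
  rw [Finset.sum_congr rfl (fun e _ => step2 e), Finset.sum_comm]
  apply Finset.sum_congr rfl
  intro y _
  rw [Finset.mul_sum]
  apply Finset.sum_congr rfl
  intro e _
  rw [mul_ite, mul_zero]

lemma SS_base (p q : ℝ) (r : Fin 1) : SS 0 p q r = 1 := by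
  unfold SS
  have huniv : (Finset.univ : Finset (Equiv.Perm (Fin 1))) = {1} := by
    apply Finset.eq_singleton_iff_unique_mem.mpr
    exact ⟨Finset.mem_univ _, fun σ _ => Equiv.ext fun x => Subsingleton.elim _ _⟩
  rw [huniv, Finset.sum_singleton]
  have h0 : (1 : Equiv.Perm (Fin 1)) 0 = r := Subsingleton.elim _ _
  rw [if_pos h0]
  unfold Wt
  have hd : descentSet (1 : Equiv.Perm (Fin 1)) = ∅ := by
    apply Finset.filter_eq_empty_iff.mpr
    intro i hi
    rintro ⟨h, -⟩
    rw [Finset.mem_range] at hi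
    omega
  rw [hd, Finset.prod_empty]

lemma sum_rev_eq {m : ℕ} (f : Fin (m + 1) → ℝ) :
    (∑ y : Fin (m + 1), f y.rev) = ∑ y : Fin (m + 1), f y :=
  Fintype.sum_bijective Fin.rev Fin.rev_involutive.bijective
    (fun y => f y.rev) f (fun x => rfl)

lemma sum_filter_not_rev {m : ℕ} (f : Fin (m + 1) → ℝ) (c : ℕ) (hc : c ≤ m + 1) :
    (∑ y ∈ Finset.univ.filter (fun y : Fin (m + 1) => ¬((y : ℕ) < c)), f y)
      = ∑ y ∈ Finset.univ.filter (fun y : Fin (m + 1) => (y : ℕ) < m + 1 - c), f y.rev := by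
  apply Finset.sum_nbij' (i := fun y => y.rev) (j := fun y => y.rev)
  · intro a ha
    simp only [Finset.mem_filter, Finset.mem_univ, true_and] at ha ⊢
    have h1 : (a : ℕ) < m + 1 := a.isLt
    rw [Fin.val_rev]
    omega
  · intro a ha
    simp only [Finset.mem_filter, Finset.mem_univ, true_and] at ha ⊢
    have h1 : (a : ℕ) < m + 1 := a.isLt
    rw [Fin.val_rev]
    omega
  · intro a _; exact Fin.rev_rev a
  · intro a _; exact Fin.rev_rev a
  · intro a _; rw [Fin.rev_rev]

lemma SS_expand (m : ℕ) (p q : ℝ) (j : Fin (m + 2)) :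
    SS (m + 1) p q j =
      p * (∑ y ∈ Finset.univ.filter (fun y : Fin (m + 1) => (y : ℕ) < (j : ℕ)), SS m q p y)
      + ∑ y ∈ Finset.univ.filter (fun y : Fin (m + 1) => (y : ℕ) < m + 1 - (j : ℕ)),
          SS m q p y.rev := by
  rw [SS_rec]
  rw [← Finset.sum_filter_add_sum_filter_not Finset.univ (fun y : Fin (m + 1) => (y : ℕ) < (j : ℕ))]
  congr 1
  · rw [Finset.mul_sum]
    apply Finset.sum_congr rfl
    intro y hy
    rw [if_pos (Finset.mem_filter.mp hy).2]
  · rw [← sum_filter_not_rev (fun y => SS m q p y) (j : ℕ) (by omega)]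
    apply Finset.sum_congr rfl
    intro y hy
    rw [if_neg (Finset.mem_filter.mp hy).2, one_mul]

/-- The main transfer step. -/
lemma main_step (m : ℕ) (p q a₁ a₂ a₃ a₄ : ℝ)
    (hpt : ∀ y : Fin (m + 1),
      a₁ * p * SS m q p y + a₂ * SS m q p y.rev + a₃ * q * SS m p q y + a₄ * SS m p q y.rev
        = a₂ * p * SS m q p y.rev + a₁ * SS m q p y + a₄ * q * SS m p q y.rev
          + a₃ * SS m p q y)
    (hg : (a₂ * p + a₁) * (∑ y : Fin (m + 1), SS m q p y)
        + (a₄ * q + a₃) * (∑ y : Fin (m + 1), SS m p q y) = 0)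
    (j : Fin (m + 2)) :
    a₁ * SS (m + 1) p q j + a₂ * SS (m + 1) p q j.rev
      + a₃ * SS (m + 1) q p j + a₄ * SS (m + 1) q p j.rev = 0 := by
  classical
  have hc₁ : (j : ℕ) ≤ m + 1 := by omega
  have hrevj : (j.rev : ℕ) = m + 1 - (j : ℕ) := by
    rw [Fin.val_rev]; omega
  -- expansion helper
  have expand : ∀ (c : ℕ) (b₁ b₂ b₃ b₄ : ℝ),
      (∑ y ∈ Finset.univ.filter (fun y : Fin (m + 1) => (y : ℕ) < c),
        (b₁ * SS m q p y + b₂ * SS m q p y.rev + b₃ * SS m p q y + b₄ * SS m p q y.rev))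
      = b₁ * (∑ y ∈ Finset.univ.filter (fun y : Fin (m + 1) => (y : ℕ) < c), SS m q p y)
        + b₂ * (∑ y ∈ Finset.univ.filter (fun y : Fin (m + 1) => (y : ℕ) < c), SS m q p y.rev)
        + b₃ * (∑ y ∈ Finset.univ.filter (fun y : Fin (m + 1) => (y : ℕ) < c), SS m p q y)
        + b₄ * (∑ y ∈ Finset.univ.filter (fun y : Fin (m + 1) => (y : ℕ) < c), SS m p q y.rev) := by
    intro c b₁ b₂ b₃ b₄
    simp only [Finset.sum_add_distrib, Finset.mul_sum]
  have key : (∑ y ∈ Finset.univ.filter (fun y : Fin (m + 1) => (y : ℕ) < (j : ℕ)),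
        (a₁ * p * SS m q p y + a₂ * SS m q p y.rev + a₃ * q * SS m p q y
          + a₄ * SS m p q y.rev))
      + (∑ y ∈ Finset.univ.filter (fun y : Fin (m + 1) => (y : ℕ) < m + 1 - (j : ℕ)),
        (a₂ * p * SS m q p y + a₁ * SS m q p y.rev + a₄ * q * SS m p q y
          + a₃ * SS m p q y.rev))
      = 0 := by
    have h1 : (∑ y ∈ Finset.univ.filter (fun y : Fin (m + 1) => (y : ℕ) < (j : ℕ)),
          (a₁ * p * SS m q p y + a₂ * SS m q p y.rev + a₃ * q * SS m p q y
            + a₄ * SS m p q y.rev))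
        = ∑ y ∈ Finset.univ.filter
            (fun y : Fin (m + 1) => ¬((y : ℕ) < m + 1 - (j : ℕ))),
          (a₂ * p * SS m q p y + a₁ * SS m q p y.rev + a₄ * q * SS m p q y
            + a₃ * SS m p q y.rev) := by
      rw [sum_filter_not_rev
        (fun y => a₂ * p * SS m q p y + a₁ * SS m q p y.rev + a₄ * q * SS m p q y
          + a₃ * SS m p q y.rev) (m + 1 - (j : ℕ)) (by omega)]
      rw [show m + 1 - (m + 1 - (j : ℕ)) = (j : ℕ) from by omega]
      apply Finset.sum_congr rfl
      intro y _
      rw [Fin.rev_rev]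
      linarith [hpt y]
    rw [h1, add_comm, Finset.sum_filter_add_sum_filter_not]
    have h2 : (∑ y : Fin (m + 1),
          (a₂ * p * SS m q p y + a₁ * SS m q p y.rev + a₄ * q * SS m p q y
            + a₃ * SS m p q y.rev))
        = (a₂ * p + a₁) * (∑ y : Fin (m + 1), SS m q p y)
          + (a₄ * q + a₃) * (∑ y : Fin (m + 1), SS m p q y) := by
      simp only [Finset.sum_add_distrib, ← Finset.mul_sum]
      rw [sum_rev_eq (SS m q p), sum_rev_eq (SS m p q)]
      ring
    rw [h2]
    exact hg
  have hA := SS_expand m p q j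
  have hB := SS_expand m p q j.rev
  have hC := SS_expand m q p j
  have hD := SS_expand m q p j.rev
  rw [hrevj] at hB hD
  rw [show m + 1 - (m + 1 - (j : ℕ)) = (j : ℕ) from by omega] at hB hD
  have e1 := expand (j : ℕ) (a₁ * p) a₂ (a₃ * q) a₄
  have e2 := expand (m + 1 - (j : ℕ)) (a₂ * p) a₁ (a₄ * q) a₃
  rw [show (fun y : Fin (m+1) => a₁ * p * SS m q p y + a₂ * SS m q p y.rev
        + a₃ * q * SS m p q y + a₄ * SS m p q y.rev)
      = (fun y : Fin (m+1) => a₁ * p * SS m q p y + a₂ * SS m q p y.rev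
        + a₃ * q * SS m p q y + a₄ * SS m p q y.rev) from rfl] at e1
  rw [e1, e2] at key
  rw [hA, hB, hC, hD]
  linarith [key]

/-! ### The four key relations -/

def pE (m : ℕ) : Prop := ∀ (p q : ℝ) (r : Fin (m + 1)),
  q * SS m p q r + SS m p q r.rev = p * SS m q p r + SS m q p r.rev

def pE2 (m : ℕ) : Prop := ∀ (p q : ℝ) (r : Fin (m + 1)),
  (1 - q ^ 2) * (SS m p q r.rev - p * SS m p q r)
    = (1 - p ^ 2) * (SS m q p r.rev - q * SS m q p r)

def pO0 (m : ℕ) : Prop := ∀ (p q : ℝ) (r : Fin (m + 1)),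
  SS m p q r + SS m p q r.rev = SS m q p r + SS m q p r.rev

def pO1 (m : ℕ) : Prop := ∀ (p q : ℝ) (r : Fin (m + 1)),
  (1 + q) * (p * SS m q p r + SS m q p r.rev) = (1 + p) * (q * SS m p q r + SS m p q r.rev)

lemma gE_of_pE {m : ℕ} (h : pE m) (p q : ℝ) :
    (1 + q) * (∑ r : Fin (m + 1), SS m p q r) = (1 + p) * (∑ r : Fin (m + 1), SS m q p r) := by
  have hs : (∑ r : Fin (m + 1), (q * SS m p q r + SS m p q r.rev))
      = ∑ r : Fin (m + 1), (p * SS m q p r + SS m q p r.rev) :=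
    Finset.sum_congr rfl (fun r _ => h p q r)
  simp only [Finset.sum_add_distrib, ← Finset.mul_sum] at hs
  rw [sum_rev_eq (SS m p q), sum_rev_eq (SS m q p)] at hs
  linarith [hs]

lemma gO_of_pO0 {m : ℕ} (h : pO0 m) (p q : ℝ) :
    (∑ r : Fin (m + 1), SS m p q r) = ∑ r : Fin (m + 1), SS m q p r := by
  have hs : (∑ r : Fin (m + 1), (SS m p q r + SS m p q r.rev))
      = ∑ r : Fin (m + 1), (SS m q p r + SS m q p r.rev) :=
    Finset.sum_congr rfl (fun r _ => h p q r)
  simp only [Finset.sum_add_distrib] at hs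
  rw [sum_rev_eq (SS m p q), sum_rev_eq (SS m q p)] at hs
  linarith [hs]

lemma step_odd (m : ℕ) (hO0 : pO0 m) (hO1 : pO1 m) : pE (m + 1) ∧ pE2 (m + 1) := by
  constructor
  · intro p q j
    have := main_step m p q q 1 (-p) (-1)
      (fun y => by linear_combination (p + q) * (hO0 p q y) + (hO1 p q y))
      (by linear_combination (-(p + q)) * (gO_of_pO0 hO0 p q)) j
    linarith [this]
  · intro p q j
    have := main_step m p q (-(p * (1 - q ^ 2))) (1 - q ^ 2) (q * (1 - p ^ 2)) (-(1 - p ^ 2))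
      (fun y => by linear_combination ((1 - p) * (1 - q)) * (hO1 p q y))
      (by ring) j
    linarith [this]

lemma step_even (m : ℕ) (hE : pE m) (hE2 : pE2 m) : pO0 (m + 1) ∧ pO1 (m + 1) := by
  constructor
  · intro p q j
    have := main_step m p q 1 1 (-1) (-1)
      (fun y => by
        have h1 := hE p q y
        have h2 := hE p q y.rev
        rw [Fin.rev_rev] at h2
        linear_combination h2 - h1)
      (by linear_combination - (gE_of_pE hE p q)) j
    linarith [this]
  · intro p q j
    have := main_step m p q (-((1 + p) * q)) (-(1 + p)) ((1 + q) * p) (1 + q)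
      (fun y => by linear_combination (hE2 p q y))
      (by linear_combination (p + q) * (gE_of_pE hE p q)) j
    linarith [this]

lemma base_pO0 : pO0 0 := by
  intro p q r
  rw [SS_base p q r, SS_base p q r.rev, SS_base q p r, SS_base q p r.rev]

lemma base_pO1 : pO1 0 := by
  intro p q r
  rw [SS_base p q r, SS_base p q r.rev, SS_base q p r, SS_base q p r.rev]
  ring

lemma evenPack : ∀ k : ℕ, pE (2 * k + 1) ∧ pE2 (2 * k + 1) := by
  intro k
  induction k with
  | zero => exact step_odd 0 base_pO0 base_pO1
  | succ n ih =>
    have hOdd := step_even (2 * n + 1) ih.1 ih.2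
    have hEv := step_odd (2 * n + 1 + 1) hOdd.1 hOdd.2
    have hidx : 2 * (n + 1) + 1 = 2 * n + 1 + 1 + 1 := by ring
    rw [hidx]
    exact hEv

end RefinedAux

/-- (1+q)A_{2n}(p,q) = (1+p)A_{2n}(q,p). -/
theorem refinedEulerian_even_symm (n : ℕ) (hn : 1 ≤ n) (p q : ℝ) :
    (1 + q) * refinedEulerian (2 * n) p q = (1 + p) * refinedEulerian (2 * n) q p := by
  obtain ⟨k, rfl⟩ : ∃ k, n = k + 1 := ⟨n - 1, by omega⟩
  have hRE : ∀ p' q' : ℝ, refinedEulerian (2 * (k + 1)) p' q'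
      = ∑ r : Fin (2 * k + 1 + 1), RefinedAux.SS (2 * k + 1) p' q' r := by
    intro p' q'
    show (∑ π : Equiv.Perm (Fin (2 * k + 1 + 1)), p' ^ odes π * q' ^ edes π) = _
    unfold RefinedAux.SS
    rw [Finset.sum_comm]
    apply Finset.sum_congr rfl
    intro σ _
    rw [Finset.sum_ite_eq Finset.univ (σ 0) (fun _ => RefinedAux.Wt p' q' σ),
      if_pos (Finset.mem_univ _)]
    exact (RefinedAux.Wt_eq p' q' σ).symm
  rw [hRE p q, hRE q p]
  exact RefinedAux.gE_of_pE (RefinedAux.evenPack k).1 p q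
end
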